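/- arXiv:1308.0985 — 7 statements merged into one kernel-verified Lean document; each statement's English description precedes it below -/
import Mathlib

section
/- Let l > 0 and Φ < (π/l)². Let φ be a classical solution of problem (E-r), and let φ̃ : [0,l] → ℝ be the unique solution of the stationary boundary value problem φ̃″(x) + Φ φ̃(x) = 0 on [0,l] with φ̃(0) = μ̃₀ and φ̃(l) = μ̃₁. Then φ(t,·) converges to φ̃ uniformly on [0,l] as t → ∞, i.e. sup_{x∈[0,l]} |φ(t,x) − φ̃(x)| → 0 as t → ∞. -/
/-!
The difference `w = φ - ψ` solves `∂ₜw = ∂ₓ²w + Φ w` with boundary values tending to `0`.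
Pick `ω > 0` with `Φ < ω²` and `ω l < π`. Then `h x = cos (ω (x - l / 2))` satisfies
`h'' = -ω² h` and `cos (ω l / 2) ≤ h ≤ 1` on `[0, l]`, so for `A ≥ 0` the barrier
`(A + B e^{-(ω² - Φ)(t - T)}) h x` is a supersolution. The parabolic maximum principle compares
`± w` with it, where `A` bounds the boundary data after time `T` and `B` bounds `w(T, ·)` (both up
to the factor `cos (ω l / 2)`). The exponential term dies out, and `A` can be made arbitrarily
small by taking `T` large.
-/

open Real Filter Set Function Topology

theorem IsMaxOn.hasDerivWithinAt_Icc_nonneg {g : ℝ → ℝ} {g' a b : ℝ} (hab : a < b)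
    (hmax : IsMaxOn g (Icc a b) b) (hg : HasDerivWithinAt g g' (Icc a b) b) : 0 ≤ g' := by
  have hcone : a - b ∈ posTangentConeAt (Icc a b) b :=
    sub_mem_posTangentConeAt_of_segment_subset (by rw [segment_symm, segment_eq_Icc hab.le])
  have := hmax.localize.hasFDerivWithinAt_nonpos hg hcone
  simp only [ContinuousLinearMap.toSpanSingleton_apply, smul_eq_mul] at this
  exact nonneg_of_mul_nonpos_right this (by linarith)

theorem IsLocalMax.second_deriv_nonpos {f f' : ℝ → ℝ} {f'' x₀ : ℝ} (hmax : IsLocalMax f x₀)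
    (hf : ∀ᶠ x in 𝓝 x₀, HasDerivAt f (f' x) x) (hf' : HasDerivAt f' f'' x₀) : f'' ≤ 0 := by
  by_contra! hpos
  have hzero : f' x₀ = 0 := hmax.hasDerivAt_eq_zero hf.self_of_nhds
  have hincr : ∀ᶠ x in 𝓝[>] x₀, 0 < f' x := by
    filter_upwards [nhdsWithin_mono _ (fun x (hx : x₀ < x) => hx.ne')
      (hasDerivAt_iff_tendsto_slope.mp hf' |>.eventually (eventually_gt_nhds hpos)),
      self_mem_nhdsWithin] with x hslope hx
    exact pos_of_slope_pos hx hslope hzero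
  obtain ⟨b, hb : x₀ < b, hsub⟩ := mem_nhdsGT_iff_exists_Ioo_subset.mp
    (hincr.and (nhdsWithin_le_nhds (hf.and hmax)))
  obtain ⟨x, hx⟩ := nonempty_Ioo.mpr hb
  have hderiv : ∀ y ∈ Icc x₀ x, HasDerivAt f (f' y) y := by
    rintro y ⟨hy₀, hyx⟩
    rcases hy₀.eq_or_lt with rfl | hy₀
    · exact hf.self_of_nhds
    · exact (hsub ⟨hy₀, hyx.trans_lt hx.2⟩).2.1
  obtain ⟨ξ, hξ, hslope⟩ := exists_hasDerivAt_eq_slope f f' hx.1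
    (fun y hy => (hderiv y hy).continuousAt.continuousWithinAt)
    (fun y hy => hderiv y (Ioo_subset_Icc_self hy))
  have hξpos : 0 < f' ξ := (hsub ⟨hξ.1, hξ.2.trans hx.2⟩).1
  have hle : f x ≤ f x₀ := (hsub hx).2.2
  rw [hslope, div_pos_iff_of_pos_right (sub_pos.mpr hx.1)] at hξpos
  linarith

/-- `v` is a classical subsolution of `∂ₜv = ∂ₓ²v + c v` on `(T, ∞) × (a, b)`. -/
def IsHeatSubsolution (c T a b : ℝ) (v : ℝ → ℝ → ℝ) : Prop :=
  ∀ s ∈ Ioi T, ∀ x ∈ Ioo a b, ∃ vt vxx : ℝ, ∃ vx : ℝ → ℝ, HasDerivAt (v · x) vt s ∧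
    (∀ᶠ y in 𝓝 x, HasDerivAt (v s) (vx y) y) ∧ HasDerivAt vx vxx x ∧ vt ≤ vxx + c * v s x

/-- `v` is a classical solution of `∂ₜv = ∂ₓ²v + c v` on `(T, ∞) × (a, b)`. -/
def IsHeatSolution (c T a b : ℝ) (v : ℝ → ℝ → ℝ) : Prop :=
  ∀ s ∈ Ioi T, ∀ x ∈ Ioo a b, ∃ vt vxx : ℝ, ∃ vx : ℝ → ℝ, HasDerivAt (v · x) vt s ∧
    (∀ᶠ y in 𝓝 x, HasDerivAt (v s) (vx y) y) ∧ HasDerivAt vx vxx x ∧ vt = vxx + c * v s x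

section

variable {c T a b : ℝ} {v w : ℝ → ℝ → ℝ}

theorem IsHeatSolution.isHeatSubsolution (hv : IsHeatSolution c T a b v) :
    IsHeatSubsolution c T a b v := by
  intro s hs x hx
  obtain ⟨vt, vxx, vx, hvt, hvx, hvxx, heq⟩ := hv s hs x hx
  exact ⟨vt, vxx, vx, hvt, hvx, hvxx, heq.le⟩

theorem IsHeatSolution.neg (hv : IsHeatSolution c T a b v) : IsHeatSolution c T a b (-v) := by
  intro s hs x hx
  obtain ⟨vt, vxx, vx, hvt, hvx, hvxx, heq⟩ := hv s hs x hx
  refine ⟨-vt, -vxx, -vx, hvt.neg, hvx.mono fun y hy => hy.neg, hvxx.neg, ?_⟩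
  simp only [Pi.neg_apply, heq]
  ring

theorem IsHeatSubsolution.add (hv : IsHeatSubsolution c T a b v)
    (hw : IsHeatSubsolution c T a b w) : IsHeatSubsolution c T a b (v + w) := by
  intro s hs x hx
  obtain ⟨vt, vxx, vx, hvt, hvx, hvxx, hv⟩ := hv s hs x hx
  obtain ⟨wt, wxx, wx, hwt, hwx, hwxx, hw⟩ := hw s hs x hx
  refine ⟨vt + wt, vxx + wxx, vx + wx, hvt.add hwt, ?_, hvxx.add hwxx, ?_⟩
  · filter_upwards [hvx, hwx] with y hvy hwy using hvy.add hwy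
  · simp only [Pi.add_apply]
    linarith

theorem IsHeatSubsolution.exp_mul (hv : IsHeatSubsolution c T a b v) (k : ℝ) :
    IsHeatSubsolution (c - k) T a b fun s x => exp (-k * s) * v s x := by
  intro s hs x hx
  obtain ⟨vt, vxx, vx, hvt, hvx, hvxx, hineq⟩ := hv s hs x hx
  have hexp : HasDerivAt (fun r => exp (-k * r)) (exp (-k * s) * -k) s := by
    simpa using ((hasDerivAt_id s).const_mul (-k)).exp
  refine ⟨exp (-k * s) * -k * v s x + exp (-k * s) * vt, exp (-k * s) * vxx,
    fun y => exp (-k * s) * vx y, hexp.mul hvt, hvx.mono fun y hy => hy.const_mul _,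
    hvxx.const_mul _, ?_⟩
  have := mul_le_mul_of_nonneg_left hineq (exp_pos (-k * s)).le
  linarith

theorem IsHeatSubsolution.nonpos_of_neg (hc : c < 0) (hv : IsHeatSubsolution c T a b v)
    (hcont : ContinuousOn (uncurry v) (Ici T ×ˢ Icc a b))
    (hT : ∀ x ∈ Icc a b, v T x ≤ 0) (ha : ∀ s ≥ T, v s a ≤ 0) (hb : ∀ s ≥ T, v s b ≤ 0) :
    ∀ s ≥ T, ∀ x ∈ Icc a b, v s x ≤ 0 := by
  by_contra! ⟨s₁, hs₁, x₁, hx₁, hpos⟩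
  have hmem₁ : (s₁, x₁) ∈ Icc T s₁ ×ˢ Icc a b := ⟨⟨hs₁, le_rfl⟩, hx₁⟩
  obtain ⟨⟨s₀, x₀⟩, ⟨hs₀, hx₀⟩, hmax⟩ := (isCompact_Icc.prod isCompact_Icc).exists_isMaxOn
    ⟨_, hmem₁⟩ (hcont.mono (prod_mono Icc_subset_Ici_self subset_rfl))
  replace hmax : ∀ r ∈ Icc T s₁, ∀ x ∈ Icc a b, v r x ≤ v s₀ x₀ :=
    fun r hr x hx => hmax (mk_mem_prod hr hx)
  have hv₀ : 0 < v s₀ x₀ := hpos.trans_le (hmax s₁ hmem₁.1 x₁ hx₁)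
  have hTs₀ : T < s₀ := hs₀.1.lt_of_ne (by rintro rfl; linarith [hT x₀ hx₀])
  have hax₀ : a < x₀ := hx₀.1.lt_of_ne (by rintro rfl; linarith [ha s₀ hs₀.1])
  have hx₀b : x₀ < b := hx₀.2.lt_of_ne (by rintro rfl; linarith [hb s₀ hs₀.1])
  obtain ⟨vt, vxx, vx, hvt, hvx, hvxx, hineq⟩ := hv s₀ hTs₀ x₀ ⟨hax₀, hx₀b⟩
  have htime : 0 ≤ vt := IsMaxOn.hasDerivWithinAt_Icc_nonneg hTs₀
    (fun r hr => hmax r ⟨hr.1, hr.2.trans hs₀.2⟩ x₀ hx₀) hvt.hasDerivWithinAt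
  have hspace : vxx ≤ 0 := IsLocalMax.second_deriv_nonpos
    (mem_of_superset (Icc_mem_nhds hax₀ hx₀b) (hmax s₀ hs₀)) hvx hvxx
  linarith [mul_neg_of_neg_of_pos hc hv₀]

theorem IsHeatSubsolution.nonpos (hv : IsHeatSubsolution c T a b v)
    (hcont : ContinuousOn (uncurry v) (Ici T ×ˢ Icc a b))
    (hT : ∀ x ∈ Icc a b, v T x ≤ 0) (ha : ∀ s ≥ T, v s a ≤ 0) (hb : ∀ s ≥ T, v s b ≤ 0) :
    ∀ s ≥ T, ∀ x ∈ Icc a b, v s x ≤ 0 := by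
  -- the weight `e^{-(c + 1) t}` makes the reaction coefficient negative
  have hweighted := (hv.exp_mul (c + 1)).nonpos_of_neg (by linarith)
    (((continuous_exp.comp (continuous_const.mul continuous_fst)).continuousOn).mul hcont)
    (fun x hx => mul_nonpos_of_nonneg_of_nonpos (exp_pos _).le (hT x hx))
    (fun s hs => mul_nonpos_of_nonneg_of_nonpos (exp_pos _).le (ha s hs))
    (fun s hs => mul_nonpos_of_nonneg_of_nonpos (exp_pos _).le (hb s hs))
  exact fun s hs x hx => nonpos_of_mul_nonpos_right (hweighted s hs x hx) (exp_pos _)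

theorem cos_half_width_le_cos {ω x : ℝ} (hω : 0 ≤ ω) (hπ : ω * (b - a) ≤ π) (hx : x ∈ Icc a b) :
    cos (ω * (b - a) / 2) ≤ cos (ω * (x - (a + b) / 2)) := by
  rw [← cos_abs (ω * _)]
  have hab : 0 ≤ ω * (b - a) := mul_nonneg hω (by linarith [hx.1, hx.2])
  refine cos_le_cos_of_nonneg_of_le_pi (abs_nonneg _) (by linarith) ?_
  have hdist : |x - (a + b) / 2| ≤ (b - a) / 2 :=
    abs_le.mpr ⟨by linarith [hx.1], by linarith [hx.2]⟩
  rw [abs_mul, abs_of_nonneg hω, mul_div_assoc]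
  exact mul_le_mul_of_nonneg_left hdist hω

theorem isHeatSubsolution_neg_barrier {ω A B : ℝ} (hω : 0 ≤ ω) (hπ : ω * (b - a) ≤ π)
    (hcω : c ≤ ω ^ 2) (hA : 0 ≤ A) :
    IsHeatSubsolution c T a b fun s x =>
      -((A + B * exp (-(ω ^ 2 - c) * (s - T))) * cos (ω * (x - (a + b) / 2))) := by
  intro s _ x hx
  set δ := ω ^ 2 - c
  have hcos : 0 ≤ cos (ω * (x - (a + b) / 2)) := by
    refine (cos_nonneg_of_mem_Icc ⟨?_, ?_⟩).trans
      (cos_half_width_le_cos hω hπ (Ioo_subset_Icc_self hx)) <;> nlinarith [hx.1, hx.2]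
  have harg : ∀ y, HasDerivAt (fun y => ω * (y - (a + b) / 2)) ω y := fun y => by
    simpa using ((hasDerivAt_id y).sub_const ((a + b) / 2)).const_mul ω
  have hexp : HasDerivAt (fun r => exp (-δ * (r - T))) (exp (-δ * (s - T)) * -δ) s := by
    simpa using (((hasDerivAt_id s).sub_const T).const_mul (-δ)).exp
  refine ⟨-(B * (exp (-δ * (s - T)) * -δ) * cos (ω * (x - (a + b) / 2))),
    -((A + B * exp (-δ * (s - T))) * (-(cos (ω * (x - (a + b) / 2)) * ω) * ω)),
    fun y => -((A + B * exp (-δ * (s - T))) * (-sin (ω * (y - (a + b) / 2)) * ω)),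
    (((hexp.const_mul B).const_add A).mul_const _).neg,
    Eventually.of_forall fun y => (((harg y).cos).const_mul _).neg,
    ((((harg x).sin.neg).mul_const ω).const_mul _).neg, ?_⟩
  have : 0 ≤ δ * A * cos (ω * (x - (a + b) / 2)) :=
    mul_nonneg (mul_nonneg (by simp only [δ]; linarith) hA) hcos
  nlinarith

theorem IsHeatSubsolution.le_barrier {ω K M : ℝ} (hω : 0 ≤ ω) (hπ : ω * (b - a) < π)
    (hcω : c ≤ ω ^ 2) (hv : IsHeatSubsolution c T a b v)
    (hcont : ContinuousOn (uncurry v) (Ici T ×ˢ Icc a b)) (hK : 0 ≤ K) (hM : 0 ≤ M)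
    (hT : ∀ x ∈ Icc a b, v T x ≤ M) (ha : ∀ s ≥ T, v s a ≤ K) (hb : ∀ s ≥ T, v s b ≤ K) :
    ∀ s ≥ T, ∀ x ∈ Icc a b,
      v s x ≤ (K + M * exp (-(ω ^ 2 - c) * (s - T))) / cos (ω * (b - a) / 2) := by
  intro s hs x hx
  have hab : a ≤ b := hx.1.trans hx.2
  set m := cos (ω * (b - a) / 2)
  have hm : 0 < m := cos_pos_of_mem_Ioo ⟨by nlinarith [pi_pos], by linarith⟩
  set z : ℝ → ℝ → ℝ := fun r y =>
    (K / m + M / m * exp (-(ω ^ 2 - c) * (r - T))) * cos (ω * (y - (a + b) / 2))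
  have hz : ∀ r, ∀ y ∈ Icc a b, K + M * exp (-(ω ^ 2 - c) * (r - T)) ≤ z r y := fun r y hy =>
    calc K + M * exp (-(ω ^ 2 - c) * (r - T))
        = (K / m + M / m * exp (-(ω ^ 2 - c) * (r - T))) * m := by field_simp
      _ ≤ z r y := mul_le_mul_of_nonneg_left (cos_half_width_le_cos hω hπ.le hy) (by positivity)
  have hzcont : Continuous (uncurry z) := by fun_prop
  have hbdry : ∀ r, ∀ y ∈ Icc a b, v r y ≤ K + M * exp (-(ω ^ 2 - c) * (r - T)) →
      (v + fun r y => -z r y) r y ≤ 0 := fun r y hy hvy => by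
    simp only [Pi.add_apply]
    linarith [hz r y hy]
  have hvz := (hv.add (isHeatSubsolution_neg_barrier hω hπ.le hcω (div_nonneg hK hm.le)
    (B := M / m))).nonpos (hcont.add hzcont.continuousOn.neg)
    (fun y hy => hbdry T y hy (by simpa using (hT y hy).trans (le_add_of_nonneg_left hK)))
    (fun r hr => hbdry r a (left_mem_Icc.mpr hab)
      ((ha r hr).trans (le_add_of_nonneg_right (mul_nonneg hM (exp_pos _).le))))
    (fun r hr => hbdry r b (right_mem_Icc.mpr hab)
      ((hb r hr).trans (le_add_of_nonneg_right (mul_nonneg hM (exp_pos _).le)))) s hs x hx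
  calc v s x ≤ z s x := by simp only [Pi.add_apply] at hvz; linarith
    _ ≤ (K / m + M / m * exp (-(ω ^ 2 - c) * (s - T))) * 1 :=
      mul_le_mul_of_nonneg_left (cos_le_one _) (by positivity)
    _ = _ := by field_simp

theorem IsHeatSolution.abs_le_barrier {ω K M : ℝ} (hω : 0 ≤ ω) (hπ : ω * (b - a) < π)
    (hcω : c ≤ ω ^ 2) (hv : IsHeatSolution c T a b v)
    (hcont : ContinuousOn (uncurry v) (Ici T ×ˢ Icc a b))
    (hT : ∀ x ∈ Icc a b, |v T x| ≤ M) (ha : ∀ s ≥ T, |v s a| ≤ K) (hb : ∀ s ≥ T, |v s b| ≤ K) :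
    ∀ s ≥ T, ∀ x ∈ Icc a b,
      |v s x| ≤ (K + M * exp (-(ω ^ 2 - c) * (s - T))) / cos (ω * (b - a) / 2) := by
  intro s hs x hx
  have hK : 0 ≤ K := (abs_nonneg _).trans (ha T le_rfl)
  have hM : 0 ≤ M := (abs_nonneg _).trans (hT x hx)
  rw [abs_le]
  constructor
  · have := hv.neg.isHeatSubsolution.le_barrier hω hπ hcω hcont.neg hK hM
      (fun y hy => (neg_le_abs _).trans (hT y hy)) (fun r hr => (neg_le_abs _).trans (ha r hr))
      (fun r hr => (neg_le_abs _).trans (hb r hr)) s hs x hx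
    simp only [Pi.neg_apply] at this
    linarith
  · exact hv.isHeatSubsolution.le_barrier hω hπ hcω hcont hK hM
      (fun y hy => (le_abs_self _).trans (hT y hy)) (fun r hr => (le_abs_self _).trans (ha r hr))
      (fun r hr => (le_abs_self _).trans (hb r hr)) s hs x hx

end

theorem exists_mem_Ioo_lt_sq {β Φ : ℝ} (hβ : 0 < β) (hΦ : Φ < β ^ 2) :
    ∃ ω ∈ Ioo 0 β, Φ < ω ^ 2 := by
  have hnear : ∀ᶠ ω in 𝓝[<] β, Φ < ω ^ 2 ∧ 0 < ω := nhdsWithin_le_nhds <|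
    ((continuous_pow 2).tendsto β |>.eventually (lt_mem_nhds hΦ)).and (lt_mem_nhds hβ)
  obtain ⟨ω, ⟨hΦω, hω⟩, hωβ⟩ := (hnear.and self_mem_nhdsWithin).exists
  exact ⟨ω, ⟨hω, hωβ⟩, hΦω⟩

theorem tendsto_div_of_exp_decay {δ K M m T : ℝ} (hδ : 0 < δ) :
    Tendsto (fun s => (K + M * exp (-δ * (s - T))) / m) atTop (𝓝 (K / m)) := by
  have hexp : Tendsto (fun s => exp (-δ * (s - T))) atTop (𝓝 0) :=
    tendsto_exp_atBot.comp <| Tendsto.const_mul_atTop_of_neg (neg_lt_zero.mpr hδ) <|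
      tendsto_atTop_add_const_right _ (-T) tendsto_id
  simpa using ((hexp.const_mul M).const_add K).div_const m

theorem isHeatSolution_sub_of_derivWithin {l Φ T : ℝ} {φ : ℝ → ℝ → ℝ} {ψ : ℝ → ℝ} (hT : 0 ≤ T)
    (hφt : ∀ t ∈ Ici (0 : ℝ), ∀ x ∈ Icc 0 l,
      DifferentiableWithinAt ℝ (fun s => φ s x) (Ici 0) t)
    (hφx1 : ∀ t ∈ Ici (0 : ℝ), ∀ x ∈ Icc 0 l,
      DifferentiableWithinAt ℝ (φ t) (Icc 0 l) x)
    (hφx2 : ∀ t ∈ Ici (0 : ℝ), ∀ x ∈ Icc 0 l,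
      DifferentiableWithinAt ℝ (derivWithin (φ t) (Icc 0 l)) (Icc 0 l) x)
    (hPDE : ∀ t ∈ Ici (0 : ℝ), ∀ x ∈ Icc 0 l,
      derivWithin (fun s => φ s x) (Ici 0) t
        = derivWithin (derivWithin (φ t) (Icc 0 l)) (Icc 0 l) x + Φ * φ t x)
    (hψ1 : ∀ x ∈ Icc 0 l, DifferentiableWithinAt ℝ ψ (Icc 0 l) x)
    (hψ2 : ∀ x ∈ Icc 0 l, DifferentiableWithinAt ℝ (derivWithin ψ (Icc 0 l)) (Icc 0 l) x)
    (hψode : ∀ x ∈ Icc 0 l,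
      derivWithin (derivWithin ψ (Icc 0 l)) (Icc 0 l) x + Φ * ψ x = 0) :
    IsHeatSolution Φ T 0 l fun s x => φ s x - ψ x := by
  intro s hs x hx
  have hs₀ : 0 ≤ s := hT.trans hs.le
  have hx' : x ∈ Icc 0 l := Ioo_subset_Icc_self hx
  refine ⟨derivWithin (fun r => φ r x) (Ici 0) s,
    derivWithin (derivWithin (φ s) (Icc 0 l)) (Icc 0 l) x
      - derivWithin (derivWithin ψ (Icc 0 l)) (Icc 0 l) x,
    fun y => derivWithin (φ s) (Icc 0 l) y - derivWithin ψ (Icc 0 l) y, ?_, ?_, ?_, ?_⟩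
  · exact ((hφt s hs₀ x hx').hasDerivWithinAt.hasDerivAt
      (Ici_mem_nhds (hT.trans_lt hs))).sub_const (ψ x)
  · filter_upwards [Ioo_mem_nhds hx.1 hx.2] with y hy
    have hnhds := Icc_mem_nhds hy.1 hy.2
    exact ((hφx1 s hs₀ y (Ioo_subset_Icc_self hy)).hasDerivWithinAt.hasDerivAt hnhds).sub
      ((hψ1 y (Ioo_subset_Icc_self hy)).hasDerivWithinAt.hasDerivAt hnhds)
  · have hnhds := Icc_mem_nhds hx.1 hx.2
    exact ((hφx2 s hs₀ x hx').hasDerivWithinAt.hasDerivAt hnhds).sub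
      ((hψ2 x hx').hasDerivWithinAt.hasDerivAt hnhds)
  · rw [hPDE s hs₀ x hx']
    linarith [hψode x hx']

theorem prf_warped_product_convergence_general (l Φ : ℝ) (hl : 0 < l) (hΦ : Φ < (π / l) ^ 2)
    (μ0 μ1 : ℝ → ℝ) (tμ0 tμ1 : ℝ)
    (hμ0lim : Tendsto μ0 atTop (nhds tμ0)) (hμ1lim : Tendsto μ1 atTop (nhds tμ1))
    (φ : ℝ → ℝ → ℝ)
    (hφcont : ContinuousOn (fun p : ℝ × ℝ => φ p.1 p.2) (Ici 0 ×ˢ Icc 0 l))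
    (hφt : ∀ t ∈ Ici (0 : ℝ), ∀ x ∈ Icc 0 l,
      DifferentiableWithinAt ℝ (fun s => φ s x) (Ici 0) t)
    (hφx1 : ∀ t ∈ Ici (0 : ℝ), ∀ x ∈ Icc 0 l,
      DifferentiableWithinAt ℝ (φ t) (Icc 0 l) x)
    (hφx2 : ∀ t ∈ Ici (0 : ℝ), ∀ x ∈ Icc 0 l,
      DifferentiableWithinAt ℝ (derivWithin (φ t) (Icc 0 l)) (Icc 0 l) x)
    (hPDE : ∀ t ∈ Ici (0 : ℝ), ∀ x ∈ Icc 0 l,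
      derivWithin (fun s => φ s x) (Ici 0) t
        = derivWithin (derivWithin (φ t) (Icc 0 l)) (Icc 0 l) x + Φ * φ t x)
    (hbd0 : ∀ t ∈ Ici (0 : ℝ), φ t 0 = μ0 t)
    (hbdl : ∀ t ∈ Ici (0 : ℝ), φ t l = μ1 t)
    (ψ : ℝ → ℝ)
    (hψ1 : ∀ x ∈ Icc 0 l, DifferentiableWithinAt ℝ ψ (Icc 0 l) x)
    (hψ2 : ∀ x ∈ Icc 0 l, DifferentiableWithinAt ℝ (derivWithin ψ (Icc 0 l)) (Icc 0 l) x)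
    (hψode : ∀ x ∈ Icc 0 l,
      derivWithin (derivWithin ψ (Icc 0 l)) (Icc 0 l) x + Φ * ψ x = 0)
    (hψ0 : ψ 0 = tμ0) (hψl : ψ l = tμ1) :
    TendstoUniformlyOn φ ψ atTop (Icc 0 l) := by
  obtain ⟨ω, ⟨hω, hωl⟩, hΦω⟩ := exists_mem_Ioo_lt_sq (div_pos pi_pos hl) hΦ
  have hπ : ω * (l - 0) < π := by rwa [sub_zero, ← lt_div_iff₀ hl]
  set m := cos (ω * (l - 0) / 2)
  have hm : 0 < m := cos_pos_of_mem_Ioo ⟨by nlinarith [pi_pos], by linarith⟩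
  have hcont : ContinuousOn (uncurry fun s x => φ s x - ψ x) (Ici 0 ×ˢ Icc 0 l) :=
    hφcont.sub (ContinuousOn.comp (fun x hx => (hψ1 x hx).continuousWithinAt)
      continuousOn_snd fun p hp => hp.2)
  rw [Metric.tendstoUniformlyOn_iff]
  intro ε hε
  set K := m * ε / 2
  have hK : 0 < K := by positivity
  obtain ⟨T, hT⟩ := eventually_atTop.mp <| (eventually_ge_atTop 0).and <|
    (hμ0lim.eventually (Metric.closedBall_mem_nhds _ hK)).and
      (hμ1lim.eventually (Metric.closedBall_mem_nhds _ hK))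
  have hT₀ : 0 ≤ T := (hT T le_rfl).1
  obtain ⟨M, hM⟩ := isCompact_Icc.exists_bound_of_continuousOn
    (hcont.comp (continuousOn_const.prodMk continuousOn_id) fun x hx => ⟨hT₀, hx⟩)
  have hdecay : ∀ᶠ s in atTop, (K + M * exp (-(ω ^ 2 - Φ) * (s - T))) / m < ε :=
    (tendsto_div_of_exp_decay (sub_pos.mpr hΦω)).eventually
      (gt_mem_nhds (by simp only [K]; field_simp; linarith))
  filter_upwards [hdecay, eventually_ge_atTop T] with s hs hsT x hx
  rw [dist_comm, dist_eq]
  refine lt_of_le_of_lt ?_ hs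
  refine (isHeatSolution_sub_of_derivWithin hT₀ hφt hφx1 hφx2 hPDE hψ1 hψ2 hψode).abs_le_barrier
    hω.le hπ hΦω.le (hcont.mono (prod_mono (Ici_subset_Ici.mpr hT₀) subset_rfl)) hM
    (fun r hr => ?_) (fun r hr => ?_) s hsT x hx
  · rw [hbd0 r (hT₀.trans hr), hψ0, ← dist_eq]
    exact (hT r hr).2.1
  · rw [hbdl r (hT₀.trans hr), hψl, ← dist_eq]
    exact (hT r hr).2.2

/-- For `Φ < (π/l)²`, a classical solution `φ` of the problem
`∂ₜφ = ∂ₓ²φ + Φφ` on `[0,∞) × [0,l]` with `φ(0,·) = φ₀`, `φ(t,0) = μ₀(t)`,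
`φ(t,l) = μ₁(t)` (where `μⱼ(t) → μ̃ⱼ` and `μⱼ'(t) → 0` as `t → ∞`) converges,
uniformly on `[0,l]` as `t → ∞`, to the solution `ψ` of the stationary problem
`ψ'' + Φψ = 0`, `ψ(0) = μ̃₀`, `ψ(l) = μ̃₁`. -/
theorem prf_warped_product_convergence (l Φ : ℝ) (hl : 0 < l) (hΦ : Φ < (π / l) ^ 2)
    (μ0 μ1 : ℝ → ℝ) (tμ0 tμ1 : ℝ)
    (hμ0C1 : ContDiffOn ℝ 1 μ0 (Ici 0)) (hμ1C1 : ContDiffOn ℝ 1 μ1 (Ici 0))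
    (hμ0lim : Tendsto μ0 atTop (nhds tμ0)) (hμ1lim : Tendsto μ1 atTop (nhds tμ1))
    (hμ0'lim : Tendsto (fun t => derivWithin μ0 (Ici 0) t) atTop (nhds 0))
    (hμ1'lim : Tendsto (fun t => derivWithin μ1 (Ici 0) t) atTop (nhds 0))
    (φ0 : ℝ → ℝ) (hφ0 : ContinuousOn φ0 (Icc 0 l))
    (φ : ℝ → ℝ → ℝ)
    (hφcont : ContinuousOn (fun p : ℝ × ℝ => φ p.1 p.2) (Ici 0 ×ˢ Icc 0 l))
    (hφt : ∀ t ∈ Ici (0 : ℝ), ∀ x ∈ Icc 0 l,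
      DifferentiableWithinAt ℝ (fun s => φ s x) (Ici 0) t)
    (hφx1 : ∀ t ∈ Ici (0 : ℝ), ∀ x ∈ Icc 0 l,
      DifferentiableWithinAt ℝ (φ t) (Icc 0 l) x)
    (hφx2 : ∀ t ∈ Ici (0 : ℝ), ∀ x ∈ Icc 0 l,
      DifferentiableWithinAt ℝ (derivWithin (φ t) (Icc 0 l)) (Icc 0 l) x)
    (hφtcont : ContinuousOn
      (fun p : ℝ × ℝ => derivWithin (fun s => φ s p.2) (Ici 0) p.1) (Ici 0 ×ˢ Icc 0 l))
    (hφxcont : ContinuousOn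
      (fun p : ℝ × ℝ => derivWithin (derivWithin (φ p.1) (Icc 0 l)) (Icc 0 l) p.2)
      (Ici 0 ×ˢ Icc 0 l))
    (hPDE : ∀ t ∈ Ici (0 : ℝ), ∀ x ∈ Icc 0 l,
      derivWithin (fun s => φ s x) (Ici 0) t
        = derivWithin (derivWithin (φ t) (Icc 0 l)) (Icc 0 l) x + Φ * φ t x)
    (hinit : ∀ x ∈ Icc 0 l, φ 0 x = φ0 x)
    (hbd0 : ∀ t ∈ Ici (0 : ℝ), φ t 0 = μ0 t)
    (hbdl : ∀ t ∈ Ici (0 : ℝ), φ t l = μ1 t)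
    (ψ : ℝ → ℝ)
    (hψ1 : ∀ x ∈ Icc 0 l, DifferentiableWithinAt ℝ ψ (Icc 0 l) x)
    (hψ2 : ∀ x ∈ Icc 0 l, DifferentiableWithinAt ℝ (derivWithin ψ (Icc 0 l)) (Icc 0 l) x)
    (hψode : ∀ x ∈ Icc 0 l,
      derivWithin (derivWithin ψ (Icc 0 l)) (Icc 0 l) x + Φ * ψ x = 0)
    (hψ0 : ψ 0 = tμ0) (hψl : ψ l = tμ1) :
    TendstoUniformlyOn φ ψ atTop (Icc 0 l) :=
  prf_warped_product_convergence_general l Φ hl hΦ μ0 μ1 tμ0 tμ1 hμ0lim hμ1lim φ hφcont hφt hφx1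
    hφx2 hPDE hbd0 hbdl ψ hψ1 hψ2 hψode hψ0 hψl
end

section
/- Let n ≥ 1, Φ > 0, and let X₀ be a real symmetric n×n matrix such that both X₀ and Φ·I − X₀ are positive definite. Then there exists a unique differentiable map X : ℝ → Matrix(n,n,ℝ) with X(0) = X₀ satisfying the matrix ODE X′(t) = 4 X(t)(X(t) − Φ·I) for all t ∈ ℝ; moreover X(t) is symmetric positive definite with Φ·I − X(t) positive definite for every t, X(t) → 0 as t → ∞, and X(t) → Φ·I as t → −∞. -/
/-!
Diagonalising `X₀ = U diag(e) Uᵀ` by an orthogonal `U`, the ansatz `X(t) = U diag(x(t)) Uᵀ`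
decouples the equation into the scalar logistic equations `xₖ' = 4 xₖ (xₖ - Φ)`, since
`d ↦ U diag(d) Uᵀ` is an algebra homomorphism. Positive definiteness of `X₀` and `Φ·I − X₀` says
exactly that every `eₖ` lies in `(0, Φ)`; the explicit logistic solutions from such initial values
stay in `(0, Φ)` and tend to `0` and `Φ` at `±∞`. Uniqueness holds because the right-hand side is
polynomial, hence locally Lipschitz.
-/

open Filter Matrix Set Topology Unitary

noncomputable def logistic (Φ c t : ℝ) : ℝ :=
  Φ * c / (c + (Φ - c) * Real.exp (4 * Φ * t))

section Logistic

variable {Φ c : ℝ}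

lemma logistic_denom_pos (hc : 0 < c) (hcΦ : c < Φ) (t : ℝ) :
    0 < c + (Φ - c) * Real.exp (4 * Φ * t) := by
  have := sub_pos.2 hcΦ
  positivity

lemma logistic_pos (hc : 0 < c) (hcΦ : c < Φ) (t : ℝ) : 0 < logistic Φ c t :=
  div_pos (mul_pos (hc.trans hcΦ) hc) (logistic_denom_pos hc hcΦ t)

lemma logistic_lt (hc : 0 < c) (hcΦ : c < Φ) (t : ℝ) : logistic Φ c t < Φ := by
  rw [logistic, div_lt_iff₀ (logistic_denom_pos hc hcΦ t)]
  nlinarith [mul_pos (mul_pos (hc.trans hcΦ) (sub_pos.2 hcΦ)) (Real.exp_pos (4 * Φ * t))]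

lemma logistic_zero (hΦ : Φ ≠ 0) : logistic Φ c 0 = c := by
  simp [logistic, mul_div_cancel_left₀ c hΦ]

lemma hasDerivAt_logistic (hc : 0 < c) (hcΦ : c < Φ) (t : ℝ) :
    HasDerivAt (logistic Φ c) (4 * logistic Φ c t * (logistic Φ c t - Φ)) t := by
  have hexp : HasDerivAt (fun s => Real.exp (4 * Φ * s)) (Real.exp (4 * Φ * t) * (4 * Φ)) t := by
    simpa using ((hasDerivAt_id t).const_mul (4 * Φ)).exp
  have hden := (hexp.const_mul (Φ - c)).const_add c
  have hden_ne := (logistic_denom_pos hc hcΦ t).ne'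
  refine ((hasDerivAt_const t (Φ * c)).div hden hden_ne).congr_deriv ?_
  unfold logistic
  generalize Real.exp (4 * Φ * t) = E at hden_ne ⊢
  field_simp
  ring

lemma tendsto_logistic_atTop (hc : 0 < c) (hcΦ : c < Φ) :
    Tendsto (logistic Φ c) atTop (𝓝 0) :=
  tendsto_const_nhds.div_atTop <| tendsto_atTop_add_const_left _ _ <|
    (Real.tendsto_exp_atTop.comp <| tendsto_id.const_mul_atTop (by linarith)).const_mul_atTop
      (sub_pos.2 hcΦ)

lemma tendsto_logistic_atBot (hc : 0 < c) (hcΦ : c < Φ) :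
    Tendsto (logistic Φ c) atBot (𝓝 Φ) := by
  have hexp : Tendsto (fun t => Real.exp (4 * Φ * t)) atBot (𝓝 0) :=
    Real.tendsto_exp_atBot.comp <| tendsto_id.const_mul_atBot (by linarith)
  have hden : Tendsto (fun t => c + (Φ - c) * Real.exp (4 * Φ * t)) atBot (𝓝 c) := by
    simpa using (hexp.const_mul (Φ - c)).const_add c
  have := (tendsto_const_nhds (x := Φ * c)).div hden hc.ne'
  rwa [mul_div_cancel_right₀ _ hc.ne'] at this

end Logistic

def riccatiField {A : Type*} [Ring A] [Algebra ℝ A] (Φ : ℝ) (a : A) : A :=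
  (4 : ℝ) • (a * (a - Φ • 1))

lemma AlgHom.map_riccatiField {A B : Type*} [Ring A] [Algebra ℝ A] [Ring B] [Algebra ℝ B]
    (f : A →ₐ[ℝ] B) (Φ : ℝ) (a : A) : f (riccatiField Φ a) = riccatiField Φ (f a) := by
  simp [riccatiField]

lemma Pi.riccatiField_apply {ι : Type*} (Φ : ℝ) (x : ι → ℝ) (k : ι) :
    riccatiField Φ x k = 4 * x k * (x k - Φ) := by
  simp [riccatiField, mul_assoc]

theorem LocallyLipschitz.eq_of_hasDerivAt {E : Type*} [NormedAddCommGroup E] [NormedSpace ℝ E]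
    {v : E → E} (hv : LocallyLipschitz v) {f g : ℝ → E}
    (hf : ∀ t, HasDerivAt f (v (f t)) t) (hg : ∀ t, HasDerivAt g (v (g t)) t) {t₀ : ℝ}
    (heq : f t₀ = g t₀) : f = g := by
  ext t
  obtain ⟨a, b, ht, ht₀⟩ : ∃ a b, t ∈ Ioo a b ∧ t₀ ∈ Ioo a b :=
    ⟨min t t₀ - 1, max t t₀ + 1, by grind⟩
  set K := f '' Icc a b ∪ g '' Icc a b
  have hK : IsCompact K :=
    (isCompact_Icc.image (continuous_iff_continuousAt.2 fun t => (hf t).continuousAt)).union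
      (isCompact_Icc.image (continuous_iff_continuousAt.2 fun t => (hg t).continuousAt))
  obtain ⟨L, hL⟩ := hv.locallyLipschitzOn.exists_lipschitzOnWith_of_compact hK
  exact ODE_solution_unique_of_mem_Ioo (v := fun _ => v) (s := fun _ => K) (fun _ _ => hL) ht₀
    (fun s hs => ⟨hf s, .inl ⟨s, Ioo_subset_Icc_self hs, rfl⟩⟩)
    (fun s hs => ⟨hg s, .inr ⟨s, Ioo_subset_Icc_self hs, rfl⟩⟩) heq ht

namespace Matrix

theorem hasDerivAt_iff {m n : Type*} [Fintype m] [Fintype n] {Z : ℝ → Matrix m n ℝ}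
    {D : Matrix m n ℝ} {t : ℝ} :
    HasDerivAt Z D t ↔ ∀ i j, HasDerivAt (fun s => Z s i j) (D i j) t :=
  hasDerivAt_pi.trans (forall_congr' fun _ => hasDerivAt_pi)

variable {ι : Type*} [Fintype ι] [DecidableEq ι]

-- Any norm would do (it induces the product topology); this one makes `Matrix ι ι ℝ` a normed
-- algebra, which is what smoothness of `riccatiField` and the chain rule need.
attribute [local instance] Matrix.linftyOpNormedAddCommGroup Matrix.linftyOpNormedRing
  Matrix.linftyOpNormedAlgebra

theorem eq_of_hasDerivAt_riccatiField {Φ : ℝ} {X Y : ℝ → Matrix ι ι ℝ}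
    (hX : ∀ t, HasDerivAt X (riccatiField Φ (X t)) t)
    (hY : ∀ t, HasDerivAt Y (riccatiField Φ (Y t)) t) {t₀ : ℝ} (heq : X t₀ = Y t₀) : X = Y := by
  have hv : ContDiff ℝ 1 (riccatiField (A := Matrix ι ι ℝ) Φ) := by
    unfold riccatiField
    fun_prop
  exact hv.locallyLipschitz.eq_of_hasDerivAt hX hY heq

theorem exists_riccatiField_solution {Φ : ℝ} {X₀ : Matrix ι ι ℝ} (h₀ : X₀.PosDef)
    (h₁ : (Φ • 1 - X₀).PosDef) :
    ∃ X : ℝ → Matrix ι ι ℝ, X 0 = X₀ ∧ (∀ t, HasDerivAt X (riccatiField Φ (X t)) t) ∧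
      (∀ t, (X t).PosDef ∧ (Φ • 1 - X t).PosDef) ∧
      Tendsto X atTop (𝓝 0) ∧ Tendsto X atBot (𝓝 (Φ • 1)) := by
  set e := h₀.1.eigenvalues
  let ψ : (ι → ℝ) →ₐ[ℝ] Matrix ι ι ℝ :=
    (AlgHomClass.toAlgHom (conjStarAlgAut ℝ _ h₀.1.eigenvectorUnitary)).comp (diagonalAlgHom ℝ)
  have hψ_posDef (d : ι → ℝ) : (ψ d).PosDef ↔ ∀ k, 0 < d k :=
    (IsUnit.posDef_star_right_conjugate_iff isUnit_coe).trans (posDef_diagonal_iff (d := d))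
  have hψ_sub (d : ι → ℝ) : Φ • 1 - ψ d = ψ (Φ • 1 - d) := by simp
  have hX₀ : X₀ = ψ e := by simpa [ψ] using h₀.1.spectral_theorem
  have he (k : ι) : 0 < e k ∧ e k < Φ := by
    refine ⟨(hψ_posDef e).1 (hX₀ ▸ h₀) k, ?_⟩
    have := (hψ_posDef _).1 (hψ_sub e ▸ hX₀ ▸ h₁) k
    simpa using this
  let x (t : ℝ) : ι → ℝ := fun k => logistic Φ (e k) t
  have hψ_cont : Continuous ψ := ψ.toLinearMap.continuous_of_finiteDimensional
  refine ⟨fun t => ψ (x t), ?_, fun t => ?_, fun t => ?_, ?_, ?_⟩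
  · rw [hX₀]
    exact congrArg ψ (funext fun k => logistic_zero ((he k).1.trans (he k).2).ne')
  · have hx : HasDerivAt x (riccatiField Φ (x t)) t := hasDerivAt_pi.2 fun k => by
      simpa [Pi.riccatiField_apply] using hasDerivAt_logistic (he k).1 (he k).2 t
    rw [← ψ.map_riccatiField]
    exact (LinearMap.toContinuousLinearMap ψ.toLinearMap).hasFDerivAt.comp_hasDerivAt t hx
  · refine ⟨(hψ_posDef _).2 fun k => logistic_pos (he k).1 (he k).2 t, ?_⟩
    rw [hψ_sub, hψ_posDef]
    intro k
    simpa using logistic_lt (he k).1 (he k).2 t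
  · have hx : Tendsto x atTop (𝓝 0) :=
      tendsto_pi_nhds.2 fun k => tendsto_logistic_atTop (he k).1 (he k).2
    rw [← map_zero ψ]
    exact (hψ_cont.tendsto 0).comp hx
  · have hx : Tendsto x atBot (𝓝 (Φ • 1)) :=
      tendsto_pi_nhds.2 fun k => by simpa using tendsto_logistic_atBot (he k).1 (he k).2
    rw [← map_one ψ, ← map_smul]
    exact (hψ_cont.tendsto _).comp hx

end Matrix

theorem jacobi_operator_flow_convergence_general (n : ℕ) (Φ : ℝ)
    (X₀ : Matrix (Fin n) (Fin n) ℝ) (hpos : X₀.PosDef)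
    (hpos' : (Φ • (1 : Matrix (Fin n) (Fin n) ℝ) - X₀).PosDef) :
    ∃ X : ℝ → Matrix (Fin n) (Fin n) ℝ,
      (X 0 = X₀ ∧ ∀ (t : ℝ) (i j : Fin n),
          HasDerivAt (fun s => X s i j)
            (((4 : ℝ) • (X t * (X t - Φ • (1 : Matrix (Fin n) (Fin n) ℝ)))) i j) t) ∧
      (∀ Y : ℝ → Matrix (Fin n) (Fin n) ℝ,
          (Y 0 = X₀ ∧ ∀ (t : ℝ) (i j : Fin n),
            HasDerivAt (fun s => Y s i j)
              (((4 : ℝ) • (Y t * (Y t - Φ • (1 : Matrix (Fin n) (Fin n) ℝ)))) i j) t) →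
          Y = X) ∧
      (∀ t : ℝ, (X t).IsSymm ∧ (X t).PosDef ∧
          (Φ • (1 : Matrix (Fin n) (Fin n) ℝ) - X t).PosDef) ∧
      (∀ i j : Fin n, Tendsto (fun t => X t i j) atTop (nhds 0)) ∧
      (∀ i j : Fin n, Tendsto (fun t => X t i j) atBot
          (nhds ((Φ • (1 : Matrix (Fin n) (Fin n) ℝ)) i j))) := by
  obtain ⟨X, hX₀, hX', hXpos, hX_atTop, hX_atBot⟩ := exists_riccatiField_solution hpos hpos'
  refine ⟨X, ⟨hX₀, fun t => hasDerivAt_iff.1 (hX' t)⟩, ?_,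
    fun t => ⟨isHermitian_iff_isSymm.1 (hXpos t).1.isHermitian, hXpos t⟩,
    fun i j => tendsto_pi_nhds.1 (tendsto_pi_nhds.1 hX_atTop i) j,
    fun i j => tendsto_pi_nhds.1 (tendsto_pi_nhds.1 hX_atBot i) j⟩
  rintro Y ⟨hY₀, hY'⟩
  exact eq_of_hasDerivAt_riccatiField (fun t => hasDerivAt_iff.2 (hY' t)) hX' (hY₀.trans hX₀.symm)

/-- For `Φ > 0` and a symmetric positive definite initial matrix `X₀` with
`Φ·I − X₀` positive definite, the matrix ODE `X' = 4 X (X − Φ·I)` (the evolution of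
the Jacobi operator under the normalized partial Ricci flow on a geodesic Riemannian
foliation) has a unique global solution with `X(0) = X₀`; this solution stays symmetric
positive definite with `Φ·I − X(t)` positive definite, tends (entrywise) to `0` as
`t → ∞` and to `Φ·I` as `t → −∞`. -/
theorem jacobi_operator_flow_convergence (n : ℕ) (hn : 1 ≤ n) (Φ : ℝ) (hΦ : 0 < Φ)
    (X₀ : Matrix (Fin n) (Fin n) ℝ) (hsymm : X₀.IsSymm) (hpos : X₀.PosDef)
    (hpos' : (Φ • (1 : Matrix (Fin n) (Fin n) ℝ) - X₀).PosDef) :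
    ∃ X : ℝ → Matrix (Fin n) (Fin n) ℝ,
      (X 0 = X₀ ∧ ∀ (t : ℝ) (i j : Fin n),
          HasDerivAt (fun s => X s i j)
            (((4 : ℝ) • (X t * (X t - Φ • (1 : Matrix (Fin n) (Fin n) ℝ)))) i j) t) ∧
      (∀ Y : ℝ → Matrix (Fin n) (Fin n) ℝ,
          (Y 0 = X₀ ∧ ∀ (t : ℝ) (i j : Fin n),
            HasDerivAt (fun s => Y s i j)
              (((4 : ℝ) • (Y t * (Y t - Φ • (1 : Matrix (Fin n) (Fin n) ℝ)))) i j) t) →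
          Y = X) ∧
      (∀ t : ℝ, (X t).IsSymm ∧ (X t).PosDef ∧
          (Φ • (1 : Matrix (Fin n) (Fin n) ℝ) - X t).PosDef) ∧
      (∀ i j : Fin n, Tendsto (fun t => X t i j) atTop (nhds 0)) ∧
      (∀ i j : Fin n, Tendsto (fun t => X t i j) atBot
          (nhds ((Φ • (1 : Matrix (Fin n) (Fin n) ℝ)) i j))) :=
  jacobi_operator_flow_convergence_general n Φ X₀ hpos hpos'
end

section
/- Let a < 0, y₀ ∈ ℝ, and let α, ν : [0,∞) → ℝ be continuous with α(t) ≤ a for all t ≥ 0 and ν bounded. Let y : [0,∞) → ℝ be differentiable with y′(t) = α(t) y(t) + ν(t) for all t ≥ 0 and y(0) = y₀. Then for every θ ∈ (0,1) and every t ≥ 0: |y(t)| ≤ |y₀| e^{at} + |a|⁻¹ e^{(1−θ)at} sup_{τ∈[0,θt]} |ν(τ)| + |a|⁻¹ sup_{τ∈[θt,t]} |ν(τ)|. -/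
/-!
Where `y ≠ 0`, `|y|` is differentiable with `|y|' = α |y| ± ν ≤ a |y| + |ν|`, and where `y = 0` its
right Dini derivative is `|ν|`; so on any interval `[s, t]` on which `|ν| ≤ M`, Grönwall's
inequality gives `|y t| ≤ |y s| e^{a(t-s)} + M / |a|`. Applying this on `[0, θt]` and on `[θt, t]`
and chaining the two bounds gives the estimate.
-/

open Real Filter Set
open scoped Topology

section LinearODE

variable {α ν y : ℝ → ℝ} {a M : ℝ}

theorem frequently_slope_abs_lt_of_hasDerivWithinAt_linear {x r : ℝ}
    (hy : HasDerivWithinAt y (α x * y x + ν x) (Ici x) x) (hα : α x ≤ a) (hν : |ν x| ≤ M)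
    (hr : a * |y x| + M < r) :
    ∃ᶠ z in 𝓝[>] x, (z - x)⁻¹ * (|y z| - |y x|) < r := by
  rcases lt_trichotomy (y x) 0 with hneg | hzero | hpos
  · refine ((hasDerivAt_abs_neg hneg).comp_hasDerivWithinAt x hy).liminf_right_slope_le ?_
    rw [abs_of_neg hneg] at hr
    nlinarith [neg_abs_le (ν x)]
  · refine hy.liminf_right_slope_norm_le ?_
    rw [hzero, abs_zero, mul_zero, zero_add] at hr
    simpa [hzero] using hν.trans_lt hr
  · refine ((hasDerivAt_abs_pos hpos).comp_hasDerivWithinAt x hy).liminf_right_slope_le ?_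
    rw [abs_of_pos hpos] at hr
    nlinarith [le_abs_self (ν x)]

theorem gronwallBound_le_of_neg {δ x : ℝ} (ha : a < 0) (hM : 0 ≤ M) :
    gronwallBound δ a M x ≤ δ * exp (a * x) + |a|⁻¹ * M := by
  have hc : 0 ≤ |a|⁻¹ * M := by positivity
  have hform : M / a * (exp (a * x) - 1) = |a|⁻¹ * M * (1 - exp (a * x)) := by
    rw [abs_of_neg ha]
    field_simp
    ring
  rw [gronwallBound_of_K_ne_0 ha.ne]
  beta_reduce
  rw [hform]
  nlinarith [exp_pos (a * x)]

theorem abs_le_of_hasDerivWithinAt_linear {s t : ℝ} (ha : a < 0) (hst : s ≤ t)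
    (hyc : ContinuousOn y (Icc s t))
    (hy : ∀ τ ∈ Ico s t, HasDerivWithinAt y (α τ * y τ + ν τ) (Ici τ) τ)
    (hα : ∀ τ ∈ Ico s t, α τ ≤ a) (hν : ∀ τ ∈ Icc s t, |ν τ| ≤ M) :
    |y t| ≤ |y s| * exp (a * (t - s)) + |a|⁻¹ * M := by
  have hM : 0 ≤ M := (abs_nonneg _).trans (hν s (left_mem_Icc.2 hst))
  refine le_trans ?_ (gronwallBound_le_of_neg ha hM)
  refine le_gronwallBound_of_liminf_deriv_right_le (f' := fun τ => a * |y τ| + M) hyc.abs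
    (fun τ hτ r hr => frequently_slope_abs_lt_of_hasDerivWithinAt_linear (hy τ hτ) (hα τ hτ)
      (hν τ (Ico_subset_Icc_self hτ)) hr) le_rfl (fun _ _ => le_rfl) t (right_mem_Icc.2 hst)

end LinearODE

theorem linear_ode_stability_estimate_general (a y₀ : ℝ) (ha : a < 0) (α ν y : ℝ → ℝ)
    (hαa : ∀ t ∈ Ici (0 : ℝ), α t ≤ a)
    (hνb : ∃ B : ℝ, ∀ t ∈ Ici (0 : ℝ), |ν t| ≤ B)
    (hy : ∀ t ∈ Ici (0 : ℝ), HasDerivWithinAt y (α t * y t + ν t) (Ici 0) t)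
    (hy0 : y 0 = y₀) :
    ∀ θ ∈ Ioo (0 : ℝ) 1, ∀ t ∈ Ici (0 : ℝ),
      |y t| ≤ |y₀| * Real.exp (a * t)
        + |a|⁻¹ * Real.exp ((1 - θ) * a * t) * sSup ((fun τ => |ν τ|) '' Icc 0 (θ * t))
        + |a|⁻¹ * sSup ((fun τ => |ν τ|) '' Icc (θ * t) t) := by
  intro θ ⟨hθ₀, hθ₁⟩ t (ht : 0 ≤ t)
  obtain ⟨B, hB⟩ := hνb
  have step : ∀ p q, 0 ≤ p → p ≤ q →
      |y q| ≤ |y p| * exp (a * (q - p)) + |a|⁻¹ * sSup ((fun τ => |ν τ|) '' Icc p q) := by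
    intro p q hp hpq
    have hIcc : Icc p q ⊆ Ici 0 := fun τ hτ => hp.trans hτ.1
    have hbdd : BddAbove ((fun τ => |ν τ|) '' Icc p q) :=
      ⟨B, forall_mem_image.2 fun τ hτ => hB τ (hIcc hτ)⟩
    exact abs_le_of_hasDerivWithinAt_linear ha hpq
      (fun τ hτ => (hy τ (hIcc hτ)).continuousWithinAt.mono hIcc)
      (fun τ hτ => (hy τ (hIcc (Ico_subset_Icc_self hτ))).mono (Ici_subset_Ici.2 (hp.trans hτ.1)))
      (fun τ hτ => hαa τ (hIcc (Ico_subset_Icc_self hτ)))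
      (fun τ hτ => le_csSup hbdd (mem_image_of_mem _ hτ))
  have hs : 0 ≤ θ * t := by positivity
  have hst : θ * t ≤ t := mul_le_of_le_one_left ht hθ₁.le
  have h₁ := step 0 (θ * t) le_rfl hs
  have h₂ := step (θ * t) t hs hst
  rw [hy0, sub_zero] at h₁
  calc |y t|
      ≤ (|y₀| * exp (a * (θ * t)) + |a|⁻¹ * sSup ((fun τ => |ν τ|) '' Icc 0 (θ * t)))
          * exp (a * (t - θ * t)) + |a|⁻¹ * sSup ((fun τ => |ν τ|) '' Icc (θ * t) t) := by
        grw [h₂, h₁]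
    _ = _ := by
        rw [add_mul, mul_assoc, ← exp_add]
        ring_nf

/-- Stability estimate for the scalar linear nonautonomous ODE `y' = α(t) y + ν(t)`
with `α(t) ≤ a < 0` and bounded forcing `ν`:
`|y(t)| ≤ |y₀| e^{at} + |a|⁻¹ e^{(1-θ)at} sup_{[0,θt]} |ν| + |a|⁻¹ sup_{[θt,t]} |ν|`. -/
theorem linear_ode_stability_estimate (a y₀ : ℝ) (ha : a < 0) (α ν y : ℝ → ℝ)
    (hα : ContinuousOn α (Ici 0)) (hν : ContinuousOn ν (Ici 0))
    (hαa : ∀ t ∈ Ici (0 : ℝ), α t ≤ a)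
    (hνb : ∃ B : ℝ, ∀ t ∈ Ici (0 : ℝ), |ν t| ≤ B)
    (hy : ∀ t ∈ Ici (0 : ℝ), HasDerivWithinAt y (α t * y t + ν t) (Ici 0) t)
    (hy0 : y 0 = y₀) :
    ∀ θ ∈ Ioo (0 : ℝ) 1, ∀ t ∈ Ici (0 : ℝ),
      |y t| ≤ |y₀| * Real.exp (a * t)
        + |a|⁻¹ * Real.exp ((1 - θ) * a * t) * sSup ((fun τ => |ν τ|) '' Icc 0 (θ * t))
        + |a|⁻¹ * sSup ((fun τ => |ν τ|) '' Icc (θ * t) t) :=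
  linear_ode_stability_estimate_general a y₀ ha α ν y hαa hνb hy hy0
end

section
/- Let a < 0, y₀ ∈ ℝ, and let α, ν : [0,∞) → ℝ be continuous with α(t) ≤ a for all t ≥ 0 and ν bounded. Let y : [0,∞) → ℝ be differentiable with y′(t) = α(t) y(t) + ν(t) for all t ≥ 0 and y(0) = y₀. If ν(t) → 0 as t → ∞, then y(t) → 0 as t → ∞. -/
/-!
The energy `v = y²` satisfies `v' = 2αy² + 2yν ≤ a v + ν²/(-a)`, the cross term being absorbed
by Young's inequality `2yν ≤ (-a) y² + ν²/(-a)`. Once `|ν| ≤ ε` on `[T, ∞)`, Grönwall's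
inequality gives `v t ≤ v T · e^{a (t - T)} + ε²/a²` there, so `limsup v ≤ ε²/a²` for every `ε > 0`.
-/

open Real Filter Set Topology

theorem gronwallBound_le_of_neg_s11 {δ K ε x : ℝ} (hK : K < 0) (hε : 0 ≤ ε) :
    gronwallBound δ K ε x ≤ δ * exp (K * x) + ε / (-K) := by
  have hεK : 0 ≤ ε / (-K) := div_nonneg hε (by linarith)
  have hKne : ε / K = -(ε / (-K)) := by rw [div_neg, neg_neg]
  rw [gronwallBound_of_K_ne_0 hK.ne, hKne]
  nlinarith [exp_pos (K * x)]

theorem le_mul_exp_add_of_hasDerivWithinAt_le {f f' : ℝ → ℝ} {K ε T t : ℝ} (hK : K < 0)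
    (hε : 0 ≤ ε) (hf : ∀ s ∈ Ici T, HasDerivWithinAt f (f' s) (Ici T) s)
    (bound : ∀ s ∈ Ici T, f' s ≤ K * f s + ε) (ht : T ≤ t) :
    f t ≤ f T * exp (K * (t - T)) + ε / (-K) := by
  have hcont : ContinuousOn f (Icc T t) := fun s hs => (hf s hs.1).continuousWithinAt.mono
    Icc_subset_Ici_self
  have hright : ∀ s ∈ Ico T t, HasDerivWithinAt f (f' s) (Ici s) s := fun s hs =>
    (hf s hs.1).mono (Ici_subset_Ici.mpr hs.1)
  calc f t ≤ gronwallBound (f T) K ε (t - T) :=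
        le_gronwallBound_of_liminf_deriv_right_le hcont
          (fun s hs _ hr => (hright s hs).liminf_right_slope_le hr) le_rfl
          (fun s hs => bound s hs.1) t ⟨ht, le_rfl⟩
    _ ≤ f T * exp (K * (t - T)) + ε / (-K) := gronwallBound_le_of_neg_s11 hK hε

theorem eventually_lt_of_hasDerivWithinAt_le_mul_add {f f' g : ℝ → ℝ} {K T c : ℝ} (hK : K < 0)
    (hf : ∀ s ∈ Ici T, HasDerivWithinAt f (f' s) (Ici T) s)
    (bound : ∀ s ∈ Ici T, f' s ≤ K * f s + g s) (hg : Tendsto g atTop (𝓝 0)) (hc : 0 < c) :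
    ∀ᶠ t in atTop, f t < c := by
  obtain ⟨ε, hε, hεK⟩ : ∃ ε > 0, ε / (-K) = c / 2 :=
    ⟨c * (-K) / 2, div_pos (mul_pos hc (neg_pos.2 hK)) two_pos, by field_simp [hK.ne]⟩
  obtain ⟨S, hS⟩ := eventually_atTop.1
    ((hg.eventually (gt_mem_nhds hε)).and (eventually_ge_atTop T))
  have hST : T ≤ S := (hS S le_rfl).2
  have hdecay : ∀ t, S ≤ t → f t ≤ f S * exp (K * (t - S)) + c / 2 := by
    intro t ht
    rw [← hεK]
    exact le_mul_exp_add_of_hasDerivWithinAt_le hK hε.le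
      (fun s hs => (hf s (hST.trans hs)).mono (Ici_subset_Ici.mpr hST))
      (fun s hs => (bound s (hST.trans hs)).trans (by linarith [(hS s hs).1])) ht
  have hexp : Tendsto (fun t => f S * exp (K * (t - S))) atTop (𝓝 0) := by
    simpa [sub_eq_add_neg] using (tendsto_exp_atBot.comp
      ((tendsto_atTop_add_const_right _ (-S) tendsto_id).const_mul_atTop_of_neg hK)).const_mul
      (f S)
  filter_upwards [hexp.eventually (gt_mem_nhds (half_pos hc)), eventually_ge_atTop S]
    with t hsmall ht
  linarith [hdecay t ht]

theorem two_mul_mul_add_le_of_le_of_neg {a α x n : ℝ} (ha : a < 0) (hα : α ≤ a) :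
    2 * x * (α * x + n) ≤ a * x ^ 2 + n ^ 2 / (-a) := by
  have hyoung : 2 * x * n ≤ (-a) * x ^ 2 + n ^ 2 / (-a) := by
    have hsq : 0 ≤ ((-a) * x - n) ^ 2 / (-a) := div_nonneg (sq_nonneg _) (by linarith)
    have hexpand : ((-a) * x - n) ^ 2 / (-a) = (-a) * x ^ 2 - 2 * x * n + n ^ 2 / (-a) := by
      field_simp [ha.ne]
      ring
    linarith
  nlinarith [sq_nonneg x]

theorem linear_ode_stabilization_general (a : ℝ) (ha : a < 0) (α ν y : ℝ → ℝ)
    (hαa : ∀ t ∈ Ici (0 : ℝ), α t ≤ a)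
    (hy : ∀ t ∈ Ici (0 : ℝ), HasDerivWithinAt y (α t * y t + ν t) (Ici 0) t)
    (hν0 : Tendsto ν atTop (nhds 0)) :
    Tendsto y atTop (nhds 0) := by
  have hsq : ∀ t ∈ Ici (0 : ℝ),
      HasDerivWithinAt (fun s => y s ^ 2) (2 * y t * (α t * y t + ν t)) (Ici 0) t :=
    fun t ht => by simpa using (hy t ht).fun_pow 2
  have hforcing : Tendsto (fun t => ν t ^ 2 / (-a)) atTop (𝓝 0) := by
    simpa using (hν0.pow 2).div_const (-a)
  have henergy : Tendsto (fun t => y t ^ 2) atTop (𝓝 0) :=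
    tendsto_order.2 ⟨fun c hc => Eventually.of_forall fun t => hc.trans_le (sq_nonneg _),
      fun c hc => eventually_lt_of_hasDerivWithinAt_le_mul_add ha hsq
        (fun t ht => two_mul_mul_add_le_of_le_of_neg ha (hαa t ht)) hforcing hc⟩
  rw [tendsto_zero_iff_abs_tendsto_zero]
  simpa [sqrt_sq_eq_abs, Function.comp_def] using henergy.sqrt

/-- Stabilization for the scalar linear nonautonomous ODE `y' = α(t) y + ν(t)` with
`α(t) ≤ a < 0` and bounded forcing: if `ν(t) → 0` as `t → ∞`, then `y(t) → 0`. -/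
theorem linear_ode_stabilization (a y₀ : ℝ) (ha : a < 0) (α ν y : ℝ → ℝ)
    (hα : ContinuousOn α (Ici 0)) (hν : ContinuousOn ν (Ici 0))
    (hαa : ∀ t ∈ Ici (0 : ℝ), α t ≤ a)
    (hνb : ∃ B : ℝ, ∀ t ∈ Ici (0 : ℝ), |ν t| ≤ B)
    (hy : ∀ t ∈ Ici (0 : ℝ), HasDerivWithinAt y (α t * y t + ν t) (Ici 0) t)
    (hy0 : y 0 = y₀)
    (hν0 : Tendsto ν atTop (nhds 0)) :
    Tendsto y atTop (nhds 0) :=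
  linear_ode_stabilization_general a ha α ν y hαa hy hν0
end

section
/- Let l > 0, Φ ∈ ℝ, let f : [0,∞) × [0,l] → ℝ be continuous, and let v : [0,∞) × [0,l] → ℝ be continuous, continuously differentiable in t, twice continuously differentiable in x (with jointly continuous derivatives), satisfying ∂_t v(t,x) = ∂_x² v(t,x) + Φ v(t,x) + f(t,x) and the homogeneous boundary conditions v(t,0) = v(t,l) = 0 for all t ≥ 0. For each integer j ≥ 1 define v_j(t) := (2/l)∫₀^l v(t,s) sin(πjs/l) ds and f_j(t) := (2/l)∫₀^l f(t,s) sin(πjs/l) ds. Then v_j is differentiable and v_j′(t) = (Φ − (πj/l)²) v_j(t) + f_j(t) for every t ≥ 0. -/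
/-!
Differentiating under the integral sign, justified by writing `v τ s = v 0 s + ∫₀^τ ∂ₜv σ s dσ`
and exchanging the two integrals, turns `v_j'` into the sine coefficient of `∂ₜv`, which by the
equation is that of `∂ₓ²v + Φ v + f`. Integrating by parts twice against `sin (π j s / l)`, which
vanishes at both ends together with `v`, turns the coefficient of `∂ₓ²v` into `-(π j / l)² v_j`.
-/

open Real Filter Set MeasureTheory intervalIntegral
open Topology Function

section ParametricIntegral

variable {E : Type*} [NormedAddCommGroup E] [NormedSpace ℝ E]

theorem continuousOn_intervalIntegral_of_continuousOn_prod {F : ℝ → ℝ → E} {a b c : ℝ}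
    (hab : a ≤ b) (hF : ContinuousOn (uncurry F) (Ici c ×ˢ Icc a b)) :
    ContinuousOn (fun τ => ∫ x in a..b, F τ x) (Ici c) := by
  intro τ₀ hτ₀
  obtain ⟨C, hC⟩ := (isCompact_Icc.prod isCompact_Icc).exists_bound_of_continuousOn
    (hF.mono (prod_mono (Icc_subset_Ici_self : Icc c (τ₀ + 1) ⊆ Ici c) subset_rfl))
  have hIoc : ∀ x ∈ uIoc a b, x ∈ Icc a b := fun x hx =>
    Ioc_subset_Icc_self (by rwa [uIoc_of_le hab] at hx)
  apply continuousWithinAt_of_dominated_interval (bound := fun _ => C)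
  · filter_upwards [self_mem_nhdsWithin] with τ hτ
    exact ((hF.uncurry_left τ hτ).intervalIntegrable_of_Icc (μ := volume) hab)
      |>.aestronglyMeasurable_restrict_uIoc
  · filter_upwards [self_mem_nhdsWithin, nhdsWithin_le_nhds (Iic_mem_nhds (lt_add_one τ₀))]
      with τ hτ hτ'
    exact ae_of_all _ fun x hx => hC (τ, x) ⟨⟨hτ, hτ'⟩, hIoc x hx⟩
  · exact intervalIntegrable_const
  · exact ae_of_all _ fun x hx => hF.uncurry_right x (hIoc x hx) τ₀ hτ₀

theorem ContinuousOn.hasDerivWithinAt_intervalIntegral_Ici [CompleteSpace E] {G : ℝ → E}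
    {c t : ℝ}
    (hG : ContinuousOn G (Ici c)) (ht : t ∈ Ici c) :
    HasDerivWithinAt (fun τ => ∫ σ in c..τ, G σ) (G t) (Ici c) t := by
  have hIcc : ContinuousOn G (Icc c (t + 1)) := hG.mono Icc_subset_Ici_self
  have ht' : t ∈ Icc c (t + 1) := ⟨ht, by linarith [mem_Ici.1 ht]⟩
  have : Fact (t ∈ Icc c (t + 1)) := ⟨ht'⟩
  have h := integral_hasDerivWithinAt_right (s := Icc c (t + 1)) (t := Icc c (t + 1))
    (hIcc.mono (uIcc_subset_Icc (left_mem_Icc.2 (ht'.1.trans ht'.2)) ht')).intervalIntegrable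
    (hIcc.stronglyMeasurableAtFilter_nhdsWithin measurableSet_Icc t)
    (hIcc t ht')
  rw [← Ici_inter_Iic] at h
  exact (hasDerivWithinAt_inter' (nhdsWithin_le_nhds (Iic_mem_nhds (lt_add_one t)))).1 h

theorem hasDerivWithinAt_intervalIntegral_of_continuousOn_deriv [CompleteSpace E]
    {F F' : ℝ → ℝ → E} {a b c t : ℝ} (hab : a ≤ b)
    (hF : ∀ τ ∈ Ici c, ∀ x ∈ Icc a b, HasDerivWithinAt (fun σ => F σ x) (F' τ x) (Ici c) τ)
    (hF' : ContinuousOn (uncurry F') (Ici c ×ˢ Icc a b))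
    (hFint : ∀ τ ∈ Ici c, IntervalIntegrable (F τ) volume a b) (ht : t ∈ Ici c) :
    HasDerivWithinAt (fun τ => ∫ x in a..b, F τ x) (∫ x in a..b, F' t x) (Ici c) t := by
  have hG := continuousOn_intervalIntegral_of_continuousOn_prod hab hF'
  have hFTC : ∀ τ ∈ Ici c, ∀ x ∈ Icc a b, ∫ σ in c..τ, F' σ x = F τ x - F c x := by
    intro τ hτ x hx
    refine integral_eq_sub_of_hasDeriv_right_of_le hτ
      (fun σ hσ => (hF σ hσ.1 x hx).continuousWithinAt.mono Icc_subset_Ici_self) ?_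
      ((hF'.uncurry_right x hx).mono Icc_subset_Ici_self |>.intervalIntegrable_of_Icc hτ)
    exact fun σ hσ => (hF σ hσ.1.le x hx).mono (Ioi_subset_Ici hσ.1.le)
  have hrep : ∀ τ ∈ Ici c,
      ∫ x in a..b, F τ x = (∫ x in a..b, F c x) + ∫ σ in c..τ, ∫ x in a..b, F' σ x := by
    intro τ hτ
    have hcompact : IntegrableOn (uncurry fun x σ => F' σ x) (uIoc a b ×ˢ uIoc c τ) := by
      rw [uIoc_of_le hab, uIoc_of_le hτ]
      refine (ContinuousOn.integrableOn_compact (isCompact_Icc.prod isCompact_Icc) ?_).mono_set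
        (prod_mono Ioc_subset_Icc_self Ioc_subset_Icc_self)
      exact hF'.comp continuous_swap.continuousOn fun p hp => ⟨hp.2.1, hp.1⟩
    rw [← sub_eq_iff_eq_add', ← integral_sub (hFint τ hτ) (hFint c self_mem_Ici),
      ← intervalIntegral_intervalIntegral_swap hcompact]
    exact integral_congr fun x hx => (hFTC τ hτ x (uIcc_of_le hab ▸ hx)).symm
  exact ((hG.hasDerivWithinAt_intervalIntegral_Ici ht).const_add _).congr
    (fun τ hτ => hrep τ hτ) (hrep t ht)

end ParametricIntegral

theorem integral_derivWithin_derivWithin_mul_sin {u : ℝ → ℝ} {k l : ℝ} (hl : 0 ≤ l)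
    (hu : ∀ x ∈ Icc 0 l, DifferentiableWithinAt ℝ u (Icc 0 l) x)
    (hu' : ∀ x ∈ Icc 0 l, DifferentiableWithinAt ℝ (derivWithin u (Icc 0 l)) (Icc 0 l) x)
    (hu'' : IntervalIntegrable (derivWithin (derivWithin u (Icc 0 l)) (Icc 0 l)) volume 0 l)
    (hu0 : u 0 = 0) (hul : u l = 0) (hkl : sin (k * l) = 0) :
    ∫ x in 0..l, derivWithin (derivWithin u (Icc 0 l)) (Icc 0 l) x * sin (k * x)
      = -k ^ 2 * ∫ x in 0..l, u x * sin (k * x) := by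
  set u' := derivWithin u (Icc 0 l)
  set u'' := derivWithin u' (Icc 0 l)
  have huc : ContinuousOn u (Icc 0 l) := fun x hx => (hu x hx).continuousWithinAt
  have hu'c : ContinuousOn u' (Icc 0 l) := fun x hx => (hu' x hx).continuousWithinAt
  have hIu : IntervalIntegrable (fun x => u x * sin (k * x)) volume 0 l :=
    (huc.mul (by fun_prop)).intervalIntegrable_of_Icc hl
  have hIu'' : IntervalIntegrable (fun x => u'' x * sin (k * x)) volume 0 l :=
    hu''.mul_continuousOn (by fun_prop)
  -- the boundary term of integrating by parts twice
  let P : ℝ → ℝ := fun x => u' x * sin (k * x) - k * u x * cos (k * x)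
  have hPcont : ContinuousOn P (Icc 0 l) := by fun_prop
  have hPderiv : ∀ x ∈ Ioo 0 l,
      HasDerivWithinAt P (u'' x * sin (k * x) + k ^ 2 * (u x * sin (k * x))) (Ioi x) x := by
    intro x hx
    have hIcc : Icc 0 l ∈ 𝓝[Ioi x] x := nhdsWithin_le_nhds (Icc_mem_nhds hx.1 hx.2)
    have hux := ((hu x (Ioo_subset_Icc_self hx)).hasDerivWithinAt).mono_of_mem_nhdsWithin hIcc
    have hu'x := ((hu' x (Ioo_subset_Icc_self hx)).hasDerivWithinAt).mono_of_mem_nhdsWithin hIcc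
    have hkx : HasDerivAt (fun y => k * y) k x := by simpa using (hasDerivAt_id x).const_mul k
    refine ((hu'x.mul ((hasDerivAt_sin _).comp x hkx).hasDerivWithinAt).sub
      ((hux.const_mul k).mul ((hasDerivAt_cos _).comp x hkx).hasDerivWithinAt)).congr_deriv ?_
    simp only [comp_apply, u', u'']
    ring
  have hFTC := integral_eq_sub_of_hasDeriv_right_of_le hl hPcont hPderiv
    (hIu''.add (hIu.const_mul _))
  have hP0 : P 0 = 0 := by simp [P, hu0]
  have hPl : P l = 0 := by simp [P, hul, hkl]
  rw [hP0, hPl, sub_zero, integral_add hIu'' (hIu.const_mul _),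
    intervalIntegral.integral_const_mul] at hFTC
  linarith

theorem integral_mul_sin_of_eq_derivWithin_derivWithin_add {u g w : ℝ → ℝ} {k l Φ : ℝ}
    (hl : 0 ≤ l) (hu : ∀ x ∈ Icc 0 l, DifferentiableWithinAt ℝ u (Icc 0 l) x)
    (hu' : ∀ x ∈ Icc 0 l, DifferentiableWithinAt ℝ (derivWithin u (Icc 0 l)) (Icc 0 l) x)
    (hu'' : ContinuousOn (derivWithin (derivWithin u (Icc 0 l)) (Icc 0 l)) (Icc 0 l))
    (hg : ContinuousOn g (Icc 0 l)) (hu0 : u 0 = 0) (hul : u l = 0) (hkl : sin (k * l) = 0)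
    (hw : ∀ x ∈ Icc 0 l, w x = derivWithin (derivWithin u (Icc 0 l)) (Icc 0 l) x + Φ * u x + g x) :
    ∫ x in 0..l, w x * sin (k * x)
      = (Φ - k ^ 2) * (∫ x in 0..l, u x * sin (k * x)) + ∫ x in 0..l, g x * sin (k * x) := by
  have hIu'' : IntervalIntegrable
      (fun x => derivWithin (derivWithin u (Icc 0 l)) (Icc 0 l) x * sin (k * x)) volume 0 l :=
    (hu''.mul (by fun_prop)).intervalIntegrable_of_Icc hl
  have hIu : IntervalIntegrable (fun x => u x * sin (k * x)) volume 0 l :=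
    (ContinuousOn.mul (fun x hx => (hu x hx).continuousWithinAt) (by fun_prop))
      |>.intervalIntegrable_of_Icc hl
  have hIg : IntervalIntegrable (fun x => g x * sin (k * x)) volume 0 l :=
    (hg.mul (by fun_prop)).intervalIntegrable_of_Icc hl
  calc _ = ∫ x in 0..l, (derivWithin (derivWithin u (Icc 0 l)) (Icc 0 l) x * sin (k * x)
        + Φ * (u x * sin (k * x)) + g x * sin (k * x)) :=
        integral_congr fun x hx => by rw [hw x (uIcc_of_le hl ▸ hx)]; ring
    _ = _ := by
        rw [integral_add (hIu''.add (hIu.const_mul Φ)) hIg, integral_add hIu'' (hIu.const_mul Φ),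
          intervalIntegral.integral_const_mul,
          integral_derivWithin_derivWithin_mul_sin hl hu hu' (hu''.intervalIntegrable_of_Icc hl)
            hu0 hul hkl]
        ring

theorem fourier_coefficients_ode_general (l Φ : ℝ) (hl : 0 < l)
    (f : ℝ → ℝ → ℝ)
    (hf : ContinuousOn (fun p : ℝ × ℝ => f p.1 p.2) (Ici 0 ×ˢ Icc 0 l))
    (v : ℝ → ℝ → ℝ)
    (hvt : ∀ t ∈ Ici (0 : ℝ), ∀ x ∈ Icc 0 l,
      DifferentiableWithinAt ℝ (fun s => v s x) (Ici 0) t)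
    (hvx1 : ∀ t ∈ Ici (0 : ℝ), ∀ x ∈ Icc 0 l,
      DifferentiableWithinAt ℝ (v t) (Icc 0 l) x)
    (hvx2 : ∀ t ∈ Ici (0 : ℝ), ∀ x ∈ Icc 0 l,
      DifferentiableWithinAt ℝ (derivWithin (v t) (Icc 0 l)) (Icc 0 l) x)
    (hvtcont : ContinuousOn
      (fun p : ℝ × ℝ => derivWithin (fun s => v s p.2) (Ici 0) p.1) (Ici 0 ×ˢ Icc 0 l))
    (hvxcont : ContinuousOn
      (fun p : ℝ × ℝ => derivWithin (derivWithin (v p.1) (Icc 0 l)) (Icc 0 l) p.2)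
      (Ici 0 ×ˢ Icc 0 l))
    (hPDE : ∀ t ∈ Ici (0 : ℝ), ∀ x ∈ Icc 0 l,
      derivWithin (fun s => v s x) (Ici 0) t
        = derivWithin (derivWithin (v t) (Icc 0 l)) (Icc 0 l) x + Φ * v t x + f t x)
    (hbd0 : ∀ t ∈ Ici (0 : ℝ), v t 0 = 0)
    (hbdl : ∀ t ∈ Ici (0 : ℝ), v t l = 0) :
    ∀ j : ℕ, 1 ≤ j → ∀ t ∈ Ici (0 : ℝ),
      HasDerivWithinAt
        (fun τ => (2 / l) * ∫ s in (0 : ℝ)..l, v τ s * Real.sin (π * (j : ℝ) * s / l))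
        ((Φ - (π * (j : ℝ) / l) ^ 2)
            * ((2 / l) * ∫ s in (0 : ℝ)..l, v t s * Real.sin (π * (j : ℝ) * s / l))
          + (2 / l) * ∫ s in (0 : ℝ)..l, f t s * Real.sin (π * (j : ℝ) * s / l))
        (Ici 0) t := by
  intro j _ t ht
  set k := π * j / l
  have hk : ∀ s, π * j * s / l = k * s := fun s => by ring
  simp only [hk]
  have hleibniz := hasDerivWithinAt_intervalIntegral_of_continuousOn_deriv hl.le
    (fun τ hτ s hs => (hvt τ hτ s hs).hasDerivWithinAt.mul_const (sin (k * s)))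
    (hvtcont.mul (by fun_prop))
    (fun τ hτ => (ContinuousOn.mul (fun x hx => (hvx1 τ hτ x hx).continuousWithinAt)
      (by fun_prop)).intervalIntegrable_of_Icc hl.le) ht
  have hcoef := integral_mul_sin_of_eq_derivWithin_derivWithin_add hl.le (hvx1 t ht) (hvx2 t ht)
    (ContinuousOn.uncurry_left (f := fun τ => derivWithin (derivWithin (v τ) (Icc 0 l)) (Icc 0 l))
      t ht hvxcont)
    (ContinuousOn.uncurry_left (f := f) t ht hf) (hbd0 t ht) (hbdl t ht)
    (by rw [show k * l = j * π by simp only [k]; field_simp]; exact sin_nat_mul_pi j)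
    (hPDE t ht)
  refine (hleibniz.const_mul (2 / l)).congr_deriv ?_
  rw [hcoef]
  ring

/-- Reduction of the heat equation with lower-order term to scalar ODEs: if `v` solves
`∂ₜv = ∂ₓ²v + Φv + f(t,x)` on `[0,∞) × [0,l]` with homogeneous boundary conditions
`v(t,0) = v(t,l) = 0`, then each Fourier sine coefficient
`v_j(t) = (2/l)∫₀ˡ v(t,s) sin(πjs/l) ds` is differentiable and satisfies
`v_j′ = (Φ − (πj/l)²) v_j + f_j` where `f_j(t) = (2/l)∫₀ˡ f(t,s) sin(πjs/l) ds`. -/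
theorem fourier_coefficients_ode (l Φ : ℝ) (hl : 0 < l)
    (f : ℝ → ℝ → ℝ)
    (hf : ContinuousOn (fun p : ℝ × ℝ => f p.1 p.2) (Ici 0 ×ˢ Icc 0 l))
    (v : ℝ → ℝ → ℝ)
    (hvcont : ContinuousOn (fun p : ℝ × ℝ => v p.1 p.2) (Ici 0 ×ˢ Icc 0 l))
    (hvt : ∀ t ∈ Ici (0 : ℝ), ∀ x ∈ Icc 0 l,
      DifferentiableWithinAt ℝ (fun s => v s x) (Ici 0) t)
    (hvx1 : ∀ t ∈ Ici (0 : ℝ), ∀ x ∈ Icc 0 l,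
      DifferentiableWithinAt ℝ (v t) (Icc 0 l) x)
    (hvx2 : ∀ t ∈ Ici (0 : ℝ), ∀ x ∈ Icc 0 l,
      DifferentiableWithinAt ℝ (derivWithin (v t) (Icc 0 l)) (Icc 0 l) x)
    (hvtcont : ContinuousOn
      (fun p : ℝ × ℝ => derivWithin (fun s => v s p.2) (Ici 0) p.1) (Ici 0 ×ˢ Icc 0 l))
    (hvxcont : ContinuousOn
      (fun p : ℝ × ℝ => derivWithin (derivWithin (v p.1) (Icc 0 l)) (Icc 0 l) p.2)
      (Ici 0 ×ˢ Icc 0 l))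
    (hPDE : ∀ t ∈ Ici (0 : ℝ), ∀ x ∈ Icc 0 l,
      derivWithin (fun s => v s x) (Ici 0) t
        = derivWithin (derivWithin (v t) (Icc 0 l)) (Icc 0 l) x + Φ * v t x + f t x)
    (hbd0 : ∀ t ∈ Ici (0 : ℝ), v t 0 = 0)
    (hbdl : ∀ t ∈ Ici (0 : ℝ), v t l = 0) :
    ∀ j : ℕ, 1 ≤ j → ∀ t ∈ Ici (0 : ℝ),
      HasDerivWithinAt
        (fun τ => (2 / l) * ∫ s in (0 : ℝ)..l, v τ s * Real.sin (π * (j : ℝ) * s / l))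
        ((Φ - (π * (j : ℝ) / l) ^ 2)
            * ((2 / l) * ∫ s in (0 : ℝ)..l, v t s * Real.sin (π * (j : ℝ) * s / l))
          + (2 / l) * ∫ s in (0 : ℝ)..l, f t s * Real.sin (π * (j : ℝ) * s / l))
        (Ici 0) t :=
  fourier_coefficients_ode_general l Φ hl f hf v hvt hvx1 hvx2 hvtcont hvxcont hPDE hbd0 hbdl
end

section
/- Let l > 0, Φ ∈ ℝ, and let δ₀, δ₁ : [0,∞) → ℝ be continuously differentiable. Define f(t,x) := (Φ δ₀(t) − δ₀′(t)) + (x/l)(Φ(δ₁(t) − δ₀(t)) + δ₀′(t) − δ₁′(t)), the Fourier sine coefficients f_j(t) := (2/l)∫₀^l f(t,s) sin(πjs/l) ds for integers j ≥ 1, and ν(t) := |Φ|(|δ₀(t)| + |δ₁(t)|) + |δ₀′(t)| + |δ₁′(t)|. Then |f_j(t)| ≤ 6 ν(t)/(π j) for every j ≥ 1 and every t ≥ 0. -/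
/-!
Over `[0, l]` the sine `sin (π j s / l)` completes `j` half-periods, so the sine coefficient of an
affine function `A + (s / l) B` has the closed form `2 (A (1 - (-1)ʲ) - B (-1)ʲ) / (π j)`, of size
at most `2 (2|A| + |B|) / (π j)`. For `f(t, ·)` both `|A|` and `|B|` are at most `ν(t)`.
-/

open Real Set intervalIntegral

lemma integral_sin_const_mul {a : ℝ} (ha : a ≠ 0) (b : ℝ) :
    ∫ s in (0 : ℝ)..b, sin (a * s) = (1 - cos (a * b)) / a := by
  rw [integral_comp_mul_left sin ha, integral_sin, mul_zero, cos_zero, smul_eq_mul,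
    inv_mul_eq_div]

lemma integral_mul_sin_const_mul {a : ℝ} (ha : a ≠ 0) (b : ℝ) :
    ∫ s in (0 : ℝ)..b, s * sin (a * s) = sin (a * b) / a ^ 2 - b * cos (a * b) / a := by
  have hderiv : ∀ s ∈ uIcc (0 : ℝ) b,
      HasDerivAt (fun s => sin (a * s) / a ^ 2 - s * cos (a * s) / a) (s * sin (a * s)) s := by
    intro s _
    have hlin : HasDerivAt (fun s => a * s) a s := by
      simpa using (hasDerivAt_id s).const_mul a
    have hsin := (hasDerivAt_sin (a * s)).comp s hlin
    have hcos : HasDerivAt (fun s => s * cos (a * s)) (1 * cos (a * s) + s * (-sin (a * s) * a)) s :=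
      (hasDerivAt_id s).mul ((hasDerivAt_cos (a * s)).comp s hlin)
    refine ((hsin.div_const (a ^ 2)).sub (hcos.div_const a)).congr_deriv ?_
    field_simp
    ring
  rw [integral_eq_sub_of_hasDerivAt hderiv ((by fun_prop : Continuous _).intervalIntegrable _ _)]
  simp

lemma sine_coeff_affine {l : ℝ} (hl : l ≠ 0) {j : ℕ} (hj : j ≠ 0) (A B : ℝ) :
    (2 / l) * ∫ s in (0 : ℝ)..l, (A + (s / l) * B) * sin (π * j * s / l)
      = 2 * (A * (1 - (-1) ^ j) - B * (-1) ^ j) / (π * j) := by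
  set a := π * j / l
  have ha : a ≠ 0 := by positivity
  have hal : a * l = j * π := by simp only [a]; field_simp
  have hsplit : ∀ s, (A + (s / l) * B) * sin (π * j * s / l)
      = A * sin (a * s) + (B / l) * (s * sin (a * s)) := by
    intro s
    rw [show π * j * s / l = a * s by ring]
    ring
  simp_rw [hsplit]
  rw [integral_add ((by fun_prop : Continuous _).intervalIntegrable _ _)
      ((by fun_prop : Continuous _).intervalIntegrable _ _),
    integral_const_mul, integral_const_mul, integral_sin_const_mul ha,
    integral_mul_sin_const_mul ha, hal, sin_nat_mul_pi, cos_nat_mul_pi]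
  rw [show π * j = a * l by rw [hal, mul_comm]]
  field_simp
  ring

lemma abs_sub_mul_neg_one_pow_le (A B : ℝ) (j : ℕ) :
    |A * (1 - (-1) ^ j) - B * (-1) ^ j| ≤ 2 * |A| + |B| := by
  have hpow : |((-1 : ℝ) ^ j)| = 1 := by simp
  have hone_sub : |1 - (-1 : ℝ) ^ j| ≤ 2 := by
    simpa [hpow, one_add_one_eq_two] using abs_sub (1 : ℝ) ((-1) ^ j)
  calc |A * (1 - (-1) ^ j) - B * (-1) ^ j|
      ≤ |A| * |1 - (-1) ^ j| + |B| * |(-1 : ℝ) ^ j| := by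
        simpa only [abs_mul] using abs_sub (A * (1 - (-1) ^ j)) (B * (-1) ^ j)
    _ ≤ 2 * |A| + |B| := by
        rw [hpow]
        nlinarith [abs_nonneg A]

lemma abs_mul_sub_le (Φ x₀ x₁ y₀ y₁ : ℝ) :
    |Φ * x₀ - y₀| ≤ |Φ| * (|x₀| + |x₁|) + |y₀| + |y₁| := by
  calc |Φ * x₀ - y₀| ≤ |Φ| * |x₀| + |y₀| := by simpa only [abs_mul] using abs_sub (Φ * x₀) y₀
    _ ≤ |Φ| * (|x₀| + |x₁|) + |y₀| + |y₁| := by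
        nlinarith [abs_nonneg Φ, abs_nonneg x₁, abs_nonneg y₁]

lemma abs_mul_sub_add_sub_le (Φ x₀ x₁ y₀ y₁ : ℝ) :
    |Φ * (x₁ - x₀) + y₀ - y₁| ≤ |Φ| * (|x₀| + |x₁|) + |y₀| + |y₁| := by
  calc |Φ * (x₁ - x₀) + y₀ - y₁| ≤ |Φ| * |x₁ - x₀| + |y₀| + |y₁| := by
        have hadd := abs_add_le (Φ * (x₁ - x₀)) y₀
        have hsub := abs_sub (Φ * (x₁ - x₀) + y₀) y₁
        rw [abs_mul] at hadd
        linarith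
    _ ≤ |Φ| * (|x₀| + |x₁|) + |y₀| + |y₁| := by
        nlinarith [abs_sub x₁ x₀, abs_nonneg Φ]

theorem fourier_coefficient_bound_general (l Φ : ℝ) (hl : 0 < l) (δ0 δ1 : ℝ → ℝ) :
    ∀ j : ℕ, 1 ≤ j → ∀ t ∈ Ici (0 : ℝ),
      |(2 / l) * ∫ s in (0 : ℝ)..l,
          ((Φ * δ0 t - derivWithin δ0 (Ici 0) t)
            + (s / l) * (Φ * (δ1 t - δ0 t)
                + derivWithin δ0 (Ici 0) t - derivWithin δ1 (Ici 0) t))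
          * Real.sin (π * (j : ℝ) * s / l)|
        ≤ 6 * (|Φ| * (|δ0 t| + |δ1 t|)
              + |derivWithin δ0 (Ici 0) t| + |derivWithin δ1 (Ici 0) t|)
            / (π * (j : ℝ)) := by
  intro j hj t _
  have hπj : 0 < π * j := by positivity
  rw [sine_coeff_affine hl.ne' (by omega), abs_div, abs_of_pos hπj, abs_mul, abs_two]
  refine div_le_div_of_nonneg_right ?_ hπj.le
  have hA := abs_mul_sub_le Φ (δ0 t) (δ1 t) (derivWithin δ0 (Ici 0) t) (derivWithin δ1 (Ici 0) t)
  have hB := abs_mul_sub_add_sub_le Φ (δ0 t) (δ1 t) (derivWithin δ0 (Ici 0) t)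
    (derivWithin δ1 (Ici 0) t)
  have hcoeff := abs_sub_mul_neg_one_pow_le (Φ * δ0 t - derivWithin δ0 (Ici 0) t)
    (Φ * (δ1 t - δ0 t) + derivWithin δ0 (Ici 0) t - derivWithin δ1 (Ici 0) t) j
  linarith

/-- Bound on the Fourier sine coefficients of
`f(t,x) = (Φδ₀ − δ₀′) + (x/l)(Φ(δ₁ − δ₀) + δ₀′ − δ₁′)`:
`|f_j(t)| ≤ 6 ν(t) / (π j)` where
`ν(t) = |Φ|(|δ₀| + |δ₁|) + |δ₀′| + |δ₁′|`. -/
theorem fourier_coefficient_bound (l Φ : ℝ) (hl : 0 < l) (δ0 δ1 : ℝ → ℝ)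
    (hδ0 : ContDiffOn ℝ 1 δ0 (Ici 0)) (hδ1 : ContDiffOn ℝ 1 δ1 (Ici 0)) :
    ∀ j : ℕ, 1 ≤ j → ∀ t ∈ Ici (0 : ℝ),
      |(2 / l) * ∫ s in (0 : ℝ)..l,
          ((Φ * δ0 t - derivWithin δ0 (Ici 0) t)
            + (s / l) * (Φ * (δ1 t - δ0 t)
                + derivWithin δ0 (Ici 0) t - derivWithin δ1 (Ici 0) t))
          * Real.sin (π * (j : ℝ) * s / l)|
        ≤ 6 * (|Φ| * (|δ0 t| + |δ1 t|)
              + |derivWithin δ0 (Ici 0) t| + |derivWithin δ1 (Ici 0) t|)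
            / (π * (j : ℝ)) :=
  fourier_coefficient_bound_general l Φ hl δ0 δ1
end

section
/- Let l > 0, Φ = (π/l)², and let μ̃₀, μ̃₁ ∈ ℝ with μ̃₀ + μ̃₁ ≠ 0. Set U₀(x) := μ̃₀(l−x)/l + μ̃₁ x/l. Let φ₀ : [0,l] → ℝ be continuous and let φ : [0,∞) × [0,l] → ℝ be continuous, continuously differentiable in t, twice continuously differentiable in x (with jointly continuous derivatives), satisfying ∂_t φ(t,x) = ∂_x² φ(t,x) + Φ φ(t,x), φ(0,x) = φ₀(x), φ(t,0) = μ̃₀, φ(t,l) = μ̃₁. Then for all t ≥ 0, (2/l)∫₀^l (φ(t,s) − U₀(s)) sin(πs/l) ds = v₁⁰ + f₁ t, where v₁⁰ := (2/l)∫₀^l (φ₀(s) − U₀(s)) sin(πs/l) ds and f₁ := 2π(μ̃₀ + μ̃₁)/l² ≠ 0. Consequently sup_{x∈[0,l]} |φ(t,x)| → ∞ as t → ∞, i.e. the solution is not stabilized at infinity. -/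
open Real Filter Set MeasureTheory intervalIntegral Topology

/-!
Since `sin (π x / l)` is the Dirichlet eigenfunction of `∂ₓ² + (π/l)²` on `[0, l]`, integrating
the equation against it kills the interior terms: by Green's identity only the boundary values
survive, so the first sine coefficient of `φ(t, ·)` has the constant time derivative
`(π/l)(μ̃₀ + μ̃₁) ≠ 0` and grows linearly. A coefficient is bounded by the sup norm, hence the sup
norm is unbounded as well.
-/

theorem hasDerivAt_deriv_mul_sin_sub_mul_cos {g g' : ℝ → ℝ} {g'' ω x : ℝ}
    (hg : HasDerivAt g (g' x) x) (hg' : HasDerivAt g' g'' x) :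
    HasDerivAt (fun y => g' y * sin (ω * y) - ω * (g y * cos (ω * y)))
      ((g'' + ω ^ 2 * g x) * sin (ω * x)) x := by
  have hω : HasDerivAt (fun y => ω * y) ω x := by simpa using (hasDerivAt_id x).const_mul ω
  refine ((hg'.mul hω.sin).sub ((hg.mul hω.cos).const_mul ω)).congr_deriv ?_
  ring

theorem integral_derivWithin_two_add_mul_sin_eq {l : ℝ} (hl : 0 < l) {g : ℝ → ℝ}
    (hg : ∀ x ∈ Icc 0 l, DifferentiableWithinAt ℝ g (Icc 0 l) x)
    (hg' : ∀ x ∈ Icc 0 l, DifferentiableWithinAt ℝ (derivWithin g (Icc 0 l)) (Icc 0 l) x)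
    (hg'' : ContinuousOn (derivWithin (derivWithin g (Icc 0 l)) (Icc 0 l)) (Icc 0 l)) :
    ∫ x in (0 : ℝ)..l,
        (derivWithin (derivWithin g (Icc 0 l)) (Icc 0 l) x + (π / l) ^ 2 * g x) * sin (π * x / l)
      = π / l * (g 0 + g l) := by
  set g₁ := derivWithin g (Icc 0 l)
  have hgc : ContinuousOn g (Icc 0 l) := fun x hx => (hg x hx).continuousWithinAt
  have hg₁c : ContinuousOn g₁ (Icc 0 l) := fun x hx => (hg' x hx).continuousWithinAt
  simp_rw [mul_div_right_comm π]
  rw [integral_eq_sub_of_hasDeriv_right_of_le (f := fun x =>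
    g₁ x * sin (π / l * x) - π / l * (g x * cos (π / l * x))) hl.le (by fun_prop)]
  · simp only [mul_zero, div_mul_cancel₀ π hl.ne', sin_zero, cos_zero, sin_pi, cos_pi]
    ring
  · intro x hx
    have hmem : Icc 0 l ∈ 𝓝 x := Icc_mem_nhds hx.1 hx.2
    have hgx := ((hg x (Ioo_subset_Icc_self hx)).differentiableAt hmem).hasDerivAt
    have hg₁x := ((hg' x (Ioo_subset_Icc_self hx)).differentiableAt hmem).hasDerivAt
    rw [← derivWithin_of_mem_nhds hmem] at hgx hg₁x
    exact (hasDerivAt_deriv_mul_sin_sub_mul_cos hgx hg₁x).hasDerivWithinAt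
  · exact ((hg''.add (continuousOn_const.mul hgc)).mul (by fun_prop)).intervalIntegrable_of_Icc
      hl.le

theorem integral_derivWithin_Ici_eq_sub {g : ℝ → ℝ} {a b : ℝ} (hab : a ≤ b)
    (hg : ∀ t ∈ Ici a, DifferentiableWithinAt ℝ g (Ici a) t)
    (hg' : ContinuousOn (derivWithin g (Ici a)) (Ici a)) :
    ∫ t in a..b, derivWithin g (Ici a) t = g b - g a := by
  refine integral_eq_sub_of_hasDeriv_right_of_le hab
    (fun t ht => (hg t ht.1).continuousWithinAt.mono Icc_subset_Ici_self) (fun t ht => ?_)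
    ((hg'.mono Icc_subset_Ici_self).intervalIntegrable_of_Icc hab)
  have hmem : Ici a ∈ 𝓝 t := Ici_mem_nhds ht.1
  rw [derivWithin_of_mem_nhds hmem]
  exact ((hg t (le_of_lt ht.1)).differentiableAt hmem).hasDerivAt.hasDerivWithinAt

theorem integral_integral_swap_of_continuousOn {f : ℝ → ℝ → ℝ} {a b c d : ℝ} (hab : a ≤ b)
    (hcd : c ≤ d) (hf : ContinuousOn (Function.uncurry f) (Icc a b ×ˢ Icc c d)) :
    ∫ x in a..b, ∫ y in c..d, f x y = ∫ y in c..d, ∫ x in a..b, f x y := by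
  simp only [integral_of_le hab, integral_of_le hcd]
  refine integral_integral_swap ?_
  rw [Measure.prod_restrict, ← Measure.volume_eq_prod]
  exact (hf.integrableOn_compact (isCompact_Icc.prod isCompact_Icc)).mono_set
    (prod_mono Ioc_subset_Icc_self Ioc_subset_Icc_self)

theorem integral_sub_mul_eq_mul_of_integral_derivWithin_mul_eq {φ : ℝ → ℝ → ℝ} {w : ℝ → ℝ}
    {a b c T : ℝ} (hab : a ≤ b) (hT : 0 ≤ T) (hw : ContinuousOn w (Icc a b))
    (hφ : ∀ t ∈ Ici (0 : ℝ), ∀ x ∈ Icc a b,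
      DifferentiableWithinAt ℝ (fun s => φ s x) (Ici 0) t)
    (hφ' : ContinuousOn
      (fun p : ℝ × ℝ => derivWithin (fun s => φ s p.2) (Ici 0) p.1) (Ici 0 ×ˢ Icc a b))
    (hc : ∀ t ∈ Ici (0 : ℝ), ∫ x in a..b, derivWithin (fun s => φ s x) (Ici 0) t * w x = c) :
    ∫ x in a..b, (φ T x - φ 0 x) * w x = c * T := by
  calc ∫ x in a..b, (φ T x - φ 0 x) * w x
      = ∫ x in a..b, ∫ t in (0 : ℝ)..T, derivWithin (fun s => φ s x) (Ici 0) t * w x := by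
        refine integral_congr fun x hx => ?_
        rw [uIcc_of_le hab] at hx
        have hφx' : ContinuousOn (derivWithin (fun s => φ s x) (Ici 0)) (Ici 0) :=
          hφ'.comp (continuous_id.prodMk continuous_const).continuousOn fun t ht => ⟨ht, hx⟩
        rw [intervalIntegral.integral_mul_const,
          integral_derivWithin_Ici_eq_sub hT (fun t ht => hφ t ht x hx) hφx']
    _ = ∫ t in (0 : ℝ)..T, ∫ x in a..b, derivWithin (fun s => φ s x) (Ici 0) t * w x := by
        refine integral_integral_swap_of_continuousOn hab hT ?_
        refine (hφ'.comp continuous_swap.continuousOn ?_).mul (hw.comp continuous_fst.continuousOn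
          fun p hp => hp.1)
        exact fun p hp => ⟨hp.2.1, hp.1⟩
    _ = ∫ _ in (0 : ℝ)..T, c := integral_congr fun t ht => by
        rw [uIcc_of_le hT] at ht
        exact hc t ht.1
    _ = c * T := by simp [mul_comm]

theorem abs_integral_mul_le_of_abs_le {f w : ℝ → ℝ} {a b M : ℝ} (hab : a ≤ b)
    (hf : ∀ x ∈ Icc a b, |f x| ≤ M) (hw : ∀ x, |w x| ≤ 1) :
    |∫ x in a..b, f x * w x| ≤ M * (b - a) := by
  have h := intervalIntegral.norm_integral_le_of_norm_le_const (a := a) (b := b)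
    (f := fun x => f x * w x) (C := M) fun x hx => ?_
  · rwa [Real.norm_eq_abs, abs_of_nonneg (sub_nonneg.2 hab)] at h
  rw [uIoc_of_le hab] at hx
  rw [Real.norm_eq_abs, abs_mul]
  have hM := hf x (Ioc_subset_Icc_self hx)
  nlinarith [abs_nonneg (f x), abs_nonneg (w x), hw x]

theorem integral_sub_mul_sub_integral_sub_mul {f g u w : ℝ → ℝ} {a b : ℝ} (hab : a ≤ b)
    (hf : ContinuousOn f (Icc a b)) (hg : ContinuousOn g (Icc a b))
    (hu : ContinuousOn u (Icc a b)) (hw : ContinuousOn w (Icc a b)) :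
    (∫ x in a..b, (f x - u x) * w x) - ∫ x in a..b, (g x - u x) * w x
      = ∫ x in a..b, (f x - g x) * w x := by
  rw [← integral_sub (f := fun x => (f x - u x) * w x) (g := fun x => (g x - u x) * w x)
    (((hf.sub hu).mul hw).intervalIntegrable_of_Icc hab)
    (((hg.sub hu).mul hw).intervalIntegrable_of_Icc hab)]
  congr 1 with x
  ring

theorem abs_two_div_mul_integral_mul_sin_le {l M : ℝ} (hl : 0 < l) {f : ℝ → ℝ}
    (hf : ∀ x ∈ Icc 0 l, |f x| ≤ M) :
    |2 / l * ∫ x in (0 : ℝ)..l, f x * sin (π * x / l)| ≤ 2 * M := by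
  rw [abs_mul, abs_of_pos (by positivity : 0 < 2 / l)]
  calc 2 / l * |∫ x in (0 : ℝ)..l, f x * sin (π * x / l)|
      ≤ 2 / l * (M * (l - 0)) := by
        gcongr
        exact abs_integral_mul_le_of_abs_le hl.le hf fun x => abs_sin_le_one _
    _ = 2 * M := by
        rw [sub_zero]
        field_simp

theorem abs_linear_interpolation_le {l x μ₀ μ₁ : ℝ} (hx : x ∈ Icc 0 l) :
    |μ₀ * ((l - x) / l) + μ₁ * (x / l)| ≤ |μ₀| + |μ₁| := by
  have h₀ : |(l - x) / l| ≤ 1 := by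
    rw [abs_of_nonneg (div_nonneg (sub_nonneg.2 hx.2) (hx.1.trans hx.2))]
    exact div_le_one_of_le₀ (by linarith [hx.1]) (hx.1.trans hx.2)
  have h₁ : |x / l| ≤ 1 := by
    rw [abs_of_nonneg (div_nonneg hx.1 (hx.1.trans hx.2))]
    exact div_le_one_of_le₀ hx.2 (hx.1.trans hx.2)
  calc |μ₀ * ((l - x) / l) + μ₁ * (x / l)|
      ≤ |μ₀| * |(l - x) / l| + |μ₁| * |x / l| := by
        simpa only [abs_mul] using abs_add_le (μ₀ * ((l - x) / l)) (μ₁ * (x / l))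
    _ ≤ |μ₀| * 1 + |μ₁| * 1 := by gcongr
    _ = |μ₀| + |μ₁| := by ring

theorem tendsto_atTop_of_abs_add_mul_le {S : ℝ → ℝ} {a b C K : ℝ} (hb : b ≠ 0) (hC : 0 < C)
    (h : ∀ t ≥ 0, |a + b * t| ≤ C * (S t + K)) : Tendsto S atTop atTop := by
  refine tendsto_atTop_mono' atTop ?_ (tendsto_atTop_add_const_right _ (-(|a| / C) - K)
    (tendsto_id.const_mul_atTop (div_pos (abs_pos.2 hb) hC)))
  filter_upwards [eventually_ge_atTop 0] with t ht
  have hbt : |b| * t - |a| ≤ C * (S t + K) := by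
    have := abs_add_le (a + b * t) (-a)
    rw [add_neg_cancel_comm, abs_mul, abs_neg, abs_of_nonneg ht] at this
    linarith [h t ht]
  have : (|b| * t - |a|) / C ≤ S t + K := (div_le_iff₀' hC).2 hbt
  simp only [id, sub_div, mul_div_right_comm |b|] at this ⊢
  linarith

theorem prf_warped_product_resonance_divergence_general (l Φ : ℝ) (hl : 0 < l)
    (hΦ : Φ = (π / l) ^ 2)
    (tμ0 tμ1 : ℝ) (hsum : tμ0 + tμ1 ≠ 0)
    (φ0 : ℝ → ℝ)
    (φ : ℝ → ℝ → ℝ)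
    (hφt : ∀ t ∈ Ici (0 : ℝ), ∀ x ∈ Icc 0 l,
      DifferentiableWithinAt ℝ (fun s => φ s x) (Ici 0) t)
    (hφx1 : ∀ t ∈ Ici (0 : ℝ), ∀ x ∈ Icc 0 l,
      DifferentiableWithinAt ℝ (φ t) (Icc 0 l) x)
    (hφx2 : ∀ t ∈ Ici (0 : ℝ), ∀ x ∈ Icc 0 l,
      DifferentiableWithinAt ℝ (derivWithin (φ t) (Icc 0 l)) (Icc 0 l) x)
    (hφtcont : ContinuousOn
      (fun p : ℝ × ℝ => derivWithin (fun s => φ s p.2) (Ici 0) p.1) (Ici 0 ×ˢ Icc 0 l))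
    (hφxcont : ContinuousOn
      (fun p : ℝ × ℝ => derivWithin (derivWithin (φ p.1) (Icc 0 l)) (Icc 0 l) p.2)
      (Ici 0 ×ˢ Icc 0 l))
    (hPDE : ∀ t ∈ Ici (0 : ℝ), ∀ x ∈ Icc 0 l,
      derivWithin (fun s => φ s x) (Ici 0) t
        = derivWithin (derivWithin (φ t) (Icc 0 l)) (Icc 0 l) x + Φ * φ t x)
    (hinit : ∀ x ∈ Icc 0 l, φ 0 x = φ0 x)
    (hbd0 : ∀ t ∈ Ici (0 : ℝ), φ t 0 = tμ0)
    (hbdl : ∀ t ∈ Ici (0 : ℝ), φ t l = tμ1) :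
    (∀ t ∈ Ici (0 : ℝ),
      (2 / l) * ∫ s in (0 : ℝ)..l,
          (φ t s - (tμ0 * ((l - s) / l) + tμ1 * (s / l))) * Real.sin (π * s / l)
        = ((2 / l) * ∫ s in (0 : ℝ)..l,
            (φ0 s - (tμ0 * ((l - s) / l) + tμ1 * (s / l))) * Real.sin (π * s / l))
          + (2 * π * (tμ0 + tμ1) / l ^ 2) * t) ∧
    (2 * π * (tμ0 + tμ1) / l ^ 2 ≠ 0) ∧
    Tendsto (fun t => sSup ((fun x => |φ t x|) '' Icc 0 l)) atTop atTop := by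
  set U : ℝ → ℝ := fun s => tμ0 * ((l - s) / l) + tμ1 * (s / l)
  have hφc : ∀ t ∈ Ici (0 : ℝ), ContinuousOn (φ t) (Icc 0 l) :=
    fun t ht x hx => (hφx1 t ht x hx).continuousWithinAt
  have hmoment : ∀ t ∈ Ici (0 : ℝ),
      ∫ x in (0 : ℝ)..l, derivWithin (fun s => φ s x) (Ici 0) t * sin (π * x / l)
        = π / l * (tμ0 + tμ1) := fun t ht => by
    rw [← hbd0 t ht, ← hbdl t ht, ← integral_derivWithin_two_add_mul_sin_eq hl (hφx1 t ht)
      (hφx2 t ht) (hφxcont.comp (continuous_const.prodMk continuous_id).continuousOn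
        fun x hx => ⟨ht, hx⟩)]
    refine integral_congr fun x hx => ?_
    rw [uIcc_of_le hl.le] at hx
    simp only [hPDE t ht x hx, hΦ]
  have hinit' : EqOn (fun s => (φ0 s - U s) * sin (π * s / l))
      (fun s => (φ 0 s - U s) * sin (π * s / l)) (uIcc 0 l) := fun x hx => by
    rw [uIcc_of_le hl.le] at hx
    simp only [hinit x hx]
  have hcoeff : ∀ t ∈ Ici (0 : ℝ),
      (2 / l) * ∫ s in (0 : ℝ)..l, (φ t s - U s) * sin (π * s / l)
        = (2 / l) * (∫ s in (0 : ℝ)..l, (φ0 s - U s) * sin (π * s / l))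
          + 2 * π * (tμ0 + tμ1) / l ^ 2 * t := fun t ht => by
    rw [integral_congr hinit']
    linear_combination (2 / l) * ((integral_sub_mul_sub_integral_sub_mul (u := U)
      (w := fun s => sin (π * s / l)) hl.le (hφc t ht) (hφc 0 self_mem_Ici) (by fun_prop)
      (by fun_prop)).trans
      (integral_sub_mul_eq_mul_of_integral_derivWithin_mul_eq hl.le ht (by fun_prop) hφt
        hφtcont hmoment))
  have hrate : 2 * π * (tμ0 + tμ1) / l ^ 2 ≠ 0 :=
    div_ne_zero (mul_ne_zero (mul_ne_zero two_ne_zero pi_ne_zero) hsum) (pow_ne_zero 2 hl.ne')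
  refine ⟨hcoeff, hrate, tendsto_atTop_of_abs_add_mul_le (K := |tμ0| + |tμ1|)
    (a := (2 / l) * ∫ s in (0 : ℝ)..l, (φ0 s - U s) * sin (π * s / l)) hrate two_pos
    fun t ht => ?_⟩
  rw [← hcoeff t ht]
  exact abs_two_div_mul_integral_mul_sin_le hl fun x hx => (abs_sub _ _).trans (add_le_add
    (le_csSup (isCompact_Icc.bddAbove_image (hφc t ht).abs) (mem_image_of_mem _ hx))
    (abs_linear_interpolation_le hx))

/-- Resonance case `Φ = (π/l)²` with stationary boundary values `μ̃₀, μ̃₁` such that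
`μ̃₀ + μ̃₁ ≠ 0`: for a classical solution `φ` of `∂ₜφ = ∂ₓ²φ + Φφ` with
`φ(t,0) = μ̃₀`, `φ(t,l) = μ̃₁`, the first Fourier sine coefficient of `φ(t,·) − U₀`
grows linearly, `(2/l)∫₀ˡ (φ(t,s) − U₀(s)) sin(πs/l) ds = v₁⁰ + f₁ t` with
`f₁ = 2π(μ̃₀+μ̃₁)/l² ≠ 0`; consequently `sup_{[0,l]} |φ(t,·)| → ∞`, i.e. the solution
is not stabilized at infinity. -/
theorem prf_warped_product_resonance_divergence (l Φ : ℝ) (hl : 0 < l)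
    (hΦ : Φ = (π / l) ^ 2)
    (tμ0 tμ1 : ℝ) (hsum : tμ0 + tμ1 ≠ 0)
    (φ0 : ℝ → ℝ) (hφ0 : ContinuousOn φ0 (Icc 0 l))
    (φ : ℝ → ℝ → ℝ)
    (hφcont : ContinuousOn (fun p : ℝ × ℝ => φ p.1 p.2) (Ici 0 ×ˢ Icc 0 l))
    (hφt : ∀ t ∈ Ici (0 : ℝ), ∀ x ∈ Icc 0 l,
      DifferentiableWithinAt ℝ (fun s => φ s x) (Ici 0) t)
    (hφx1 : ∀ t ∈ Ici (0 : ℝ), ∀ x ∈ Icc 0 l,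
      DifferentiableWithinAt ℝ (φ t) (Icc 0 l) x)
    (hφx2 : ∀ t ∈ Ici (0 : ℝ), ∀ x ∈ Icc 0 l,
      DifferentiableWithinAt ℝ (derivWithin (φ t) (Icc 0 l)) (Icc 0 l) x)
    (hφtcont : ContinuousOn
      (fun p : ℝ × ℝ => derivWithin (fun s => φ s p.2) (Ici 0) p.1) (Ici 0 ×ˢ Icc 0 l))
    (hφxcont : ContinuousOn
      (fun p : ℝ × ℝ => derivWithin (derivWithin (φ p.1) (Icc 0 l)) (Icc 0 l) p.2)
      (Ici 0 ×ˢ Icc 0 l))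
    (hPDE : ∀ t ∈ Ici (0 : ℝ), ∀ x ∈ Icc 0 l,
      derivWithin (fun s => φ s x) (Ici 0) t
        = derivWithin (derivWithin (φ t) (Icc 0 l)) (Icc 0 l) x + Φ * φ t x)
    (hinit : ∀ x ∈ Icc 0 l, φ 0 x = φ0 x)
    (hbd0 : ∀ t ∈ Ici (0 : ℝ), φ t 0 = tμ0)
    (hbdl : ∀ t ∈ Ici (0 : ℝ), φ t l = tμ1) :
    (∀ t ∈ Ici (0 : ℝ),
      (2 / l) * ∫ s in (0 : ℝ)..l,
          (φ t s - (tμ0 * ((l - s) / l) + tμ1 * (s / l))) * Real.sin (π * s / l)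
        = ((2 / l) * ∫ s in (0 : ℝ)..l,
            (φ0 s - (tμ0 * ((l - s) / l) + tμ1 * (s / l))) * Real.sin (π * s / l))
          + (2 * π * (tμ0 + tμ1) / l ^ 2) * t) ∧
    (2 * π * (tμ0 + tμ1) / l ^ 2 ≠ 0) ∧
    Tendsto (fun t => sSup ((fun x => |φ t x|) '' Icc 0 l)) atTop atTop :=
  prf_warped_product_resonance_divergence_general l Φ hl hΦ tμ0 tμ1 hsum φ0 φ hφt hφx1 hφx2 hφtcont
    hφxcont hPDE hinit hbd0 hbdl
end
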